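/- arXiv:2005.00937 — 8 statements merged into one kernel-verified Lean document; each statement's English description precedes it below -/
import Mathlib

section
/- Let Γ be a bar visibility representation of a graph G = (V,E), i.e., each vertex v is assigned a closed interval X(v) ⊆ ℝ and a height y(v) ∈ ℝ with y injective on vertices whose intervals overlap, such that uv ∈ E if and only if there is a point x ∈ X(u) ∩ X(v) with no vertex w ∉ {u,v} satisfying x ∈ X(w) and y(w) strictly between y(u) and y(v). Then for any subsets S1, S2 ⊆ V and any point x ∈ X(S1) ∩ X(S2) (where X(S) = ⋃_{v∈S} X(v)), there exist u ∈ S1, v ∈ S2 and a path u = u1, u2, …, uk = v in G such that x ∈ X(ui) for all i. -/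
/-- Property 1 (ThinOverlap): in a bar visibility representation, any point in the
x-projections of both `S1` and `S2` yields a path in `G` all of whose vertices' bars
contain that point. -/
theorem stmt_1 {V : Type} [Fintype V] [DecidableEq V]
    (G : SimpleGraph V) (l r y : V → ℝ) (hlr : ∀ v, l v ≤ r v)
    -- heights are distinct for vertices whose intervals overlap
    (hinj : ∀ u v : V, u ≠ v →
      (Set.Icc (l u) (r u) ∩ Set.Icc (l v) (r v)).Nonempty → y u ≠ y v)
    -- edges are exactly the unblocked vertical visibilities
    (hedge : ∀ u v : V, G.Adj u v ↔ u ≠ v ∧ ∃ x : ℝ,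
      x ∈ Set.Icc (l u) (r u) ∧ x ∈ Set.Icc (l v) (r v) ∧
      ∀ w : V, w ≠ u → w ≠ v → x ∈ Set.Icc (l w) (r w) →
        ¬ ((y u < y w ∧ y w < y v) ∨ (y v < y w ∧ y w < y u)))
    (S1 S2 : Set V) (x : ℝ)
    (hx1 : x ∈ ⋃ v ∈ S1, Set.Icc (l v) (r v))
    (hx2 : x ∈ ⋃ v ∈ S2, Set.Icc (l v) (r v)) :
    ∃ u ∈ S1, ∃ v ∈ S2, ∃ p : G.Walk u v, p.IsPath ∧
      ∀ w ∈ p.support, x ∈ Set.Icc (l w) (r w) := by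
  classical
  simp only [Set.mem_iUnion] at hx1 hx2
  obtain ⟨u, hu, hxu⟩ := hx1
  obtain ⟨v, hv, hxv⟩ := hx2
  have key : ∀ n : ℕ, ∀ a b : V, x ∈ Set.Icc (l a) (r a) → x ∈ Set.Icc (l b) (r b) →
      Set.ncard {w | x ∈ Set.Icc (l w) (r w) ∧
        ((y a < y w ∧ y w < y b) ∨ (y b < y w ∧ y w < y a))} ≤ n →
      ∃ p : G.Walk a b, ∀ w ∈ p.support, x ∈ Set.Icc (l w) (r w) := by
    intro n
    induction n with
    | zero =>
      intro a b ha hb hcard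
      by_cases hab : a = b
      · subst hab
        refine ⟨SimpleGraph.Walk.nil, fun w hw => ?_⟩
        simp only [SimpleGraph.Walk.support_nil, List.mem_singleton] at hw
        subst hw; exact ha
      · have hempty : {w | x ∈ Set.Icc (l w) (r w) ∧
            ((y a < y w ∧ y w < y b) ∨ (y b < y w ∧ y w < y a))} = ∅ := by
          rw [← Set.ncard_eq_zero (Set.toFinite _)]
          omega
        have hadj : G.Adj a b := by
          rw [hedge]
          refine ⟨hab, x, ha, hb, fun w hwa hwb hwx hbet => ?_⟩
          have : w ∈ ({w | x ∈ Set.Icc (l w) (r w) ∧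
              ((y a < y w ∧ y w < y b) ∨ (y b < y w ∧ y w < y a))} : Set V) :=
            ⟨hwx, hbet⟩
          rw [hempty] at this
          exact this
        refine ⟨SimpleGraph.Walk.cons hadj SimpleGraph.Walk.nil, ?_⟩
        intro w hw
        simp only [SimpleGraph.Walk.support_cons, SimpleGraph.Walk.support_nil,
          List.mem_cons, List.mem_singleton] at hw
        rcases hw with rfl | rfl | h
        · exact ha
        · exact hb
        · simp at h
    | succ n ih =>
      intro a b ha hb hcard
      set S : Set V := {w | x ∈ Set.Icc (l w) (r w) ∧
        ((y a < y w ∧ y w < y b) ∨ (y b < y w ∧ y w < y a))} with hS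
      by_cases h0 : Set.ncard S ≤ n
      · exact ih a b ha hb h0
      · have hSne : S.Nonempty := by
          rw [Set.nonempty_iff_ne_empty]
          intro h
          rw [h, Set.ncard_empty] at h0
          omega
        obtain ⟨w, hwS⟩ := hSne
        obtain ⟨hwx, hwbet⟩ := hwS
        have hsub1 : {w' | x ∈ Set.Icc (l w') (r w') ∧
            ((y a < y w' ∧ y w' < y w) ∨ (y w < y w' ∧ y w' < y a))} ⊆ S \ {w} := by
          rintro w' ⟨hx', hb'⟩
          refine ⟨⟨hx', ?_⟩, ?_⟩
          · rcases hb' with ⟨h1, h2⟩ | ⟨h1, h2⟩ <;> rcases hwbet with ⟨h3, h4⟩ | ⟨h3, h4⟩ <;>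
              first
                | (left; exact ⟨by linarith, by linarith⟩)
                | (right; exact ⟨by linarith, by linarith⟩)
          · rintro rfl
            rcases hb' with ⟨_, h2⟩ | ⟨h1, _⟩ <;> simp at * <;> linarith
        have hsub2 : {w' | x ∈ Set.Icc (l w') (r w') ∧
            ((y w < y w' ∧ y w' < y b) ∨ (y b < y w' ∧ y w' < y w))} ⊆ S \ {w} := by
          rintro w' ⟨hx', hb'⟩
          refine ⟨⟨hx', ?_⟩, ?_⟩
          · rcases hb' with ⟨h1, h2⟩ | ⟨h1, h2⟩ <;> rcases hwbet with ⟨h3, h4⟩ | ⟨h3, h4⟩ <;>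
              first
                | (left; exact ⟨by linarith, by linarith⟩)
                | (right; exact ⟨by linarith, by linarith⟩)
          · rintro rfl
            rcases hb' with ⟨h1, _⟩ | ⟨_, h2⟩ <;> simp at * <;> linarith
        have hlt : Set.ncard (S \ {w}) < Set.ncard S :=
          Set.ncard_diff_singleton_lt_of_mem ⟨hwx, hwbet⟩ (Set.toFinite _)
        have hc1 : Set.ncard {w' | x ∈ Set.Icc (l w') (r w') ∧
            ((y a < y w' ∧ y w' < y w) ∨ (y w < y w' ∧ y w' < y a))} ≤ n := by
          have := Set.ncard_le_ncard hsub1 (Set.toFinite _)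
          omega
        have hc2 : Set.ncard {w' | x ∈ Set.Icc (l w') (r w') ∧
            ((y w < y w' ∧ y w' < y b) ∨ (y b < y w' ∧ y w' < y w))} ≤ n := by
          have := Set.ncard_le_ncard hsub2 (Set.toFinite _)
          omega
        obtain ⟨p1, hp1⟩ := ih a w ha hwx hc1
        obtain ⟨p2, hp2⟩ := ih w b hwx hb hc2
        refine ⟨p1.append p2, fun w' hw' => ?_⟩
        rcases (SimpleGraph.Walk.mem_support_append_iff _ _).1 hw' with h | h
        · exact hp1 w' h
        · exact hp2 w' h
  obtain ⟨p, hp⟩ := key _ u v hxu hxv le_rfl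
  exact ⟨u, hu, v, hv, p.bypass, p.bypass_isPath,
    fun w hw => hp w (p.support_bypass_subset hw)⟩
end

section
/- Let Γ be a bar visibility representation of a graph G = (V,E) (as defined via intervals X(v) and heights y(v), with edges given by unblocked vertical visibility). Suppose u1, …, uℓ is the unique path in G between u1 and uℓ. If for some indices 1 ≤ i < j < k ≤ ℓ both y(ui) > y(uj) and y(uk) > y(uj), or both y(ui) < y(uj) and y(uk) < y(uj), then X({u1,…,ui}) ∩ X({uk,…,uℓ}) = ∅. -/
open SimpleGraph

/-- getVert is injective on `[0, length]` for a path. -/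
lemma path_getVert_inj {V : Type} {G : SimpleGraph V} {a b : V} :
    ∀ (p : G.Walk a b), p.IsPath → ∀ m n, m ≤ p.length → n ≤ p.length →
      p.getVert m = p.getVert n → m = n := by
  intro p
  induction p with
  | nil => intro _ m n hm hn _; simp at hm hn; omega
  | @cons u v w h q ih =>
    intro hp m n hm hn heq
    rw [Walk.cons_isPath_iff] at hp
    simp only [Walk.length_cons] at hm hn
    match m, n with
    | 0, 0 => rfl
    | 0, n + 1 =>
      exfalso
      rw [Walk.getVert_zero, Walk.getVert_cons_succ] at heq
      exact hp.2 (Walk.mem_support_iff_exists_getVert.mpr ⟨n, heq.symm, by omega⟩)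
    | m + 1, 0 =>
      exfalso
      rw [Walk.getVert_zero, Walk.getVert_cons_succ] at heq
      exact hp.2 (Walk.mem_support_iff_exists_getVert.mpr ⟨m, heq, by omega⟩)
    | m + 1, n + 1 =>
      rw [Walk.getVert_cons_succ, Walk.getVert_cons_succ] at heq
      have := ih hp.1 m n (by omega) (by omega) heq
      omega

/-- A walk from the start to the `m`-th vertex of a walk, whose support is among
the first `m+1` vertices. -/
lemma prefix_walk {V : Type} {G : SimpleGraph V} {a b : V} (p : G.Walk a b) :
    ∀ m, m ≤ p.length → ∃ w : G.Walk a (p.getVert m),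
      ∀ v ∈ w.support, ∃ t, t ≤ m ∧ p.getVert t = v := by
  intro m
  induction m with
  | zero =>
    intro _
    refine ⟨Walk.nil.copy rfl (p.getVert_zero).symm, ?_⟩
    intro v hv
    rw [Walk.support_copy] at hv
    simp at hv
    exact ⟨0, le_refl _, by rw [p.getVert_zero, hv]⟩
  | succ m ih =>
    intro hm
    obtain ⟨w, hw⟩ := ih (by omega)
    refine ⟨w.concat (p.adj_getVert_succ (by omega)), ?_⟩
    intro v hv
    rw [Walk.support_concat, List.mem_append] at hv
    rcases hv with hv | hv
    · obtain ⟨t, ht, hteq⟩ := hw v hv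
      exact ⟨t, by omega, hteq⟩
    · simp at hv
      exact ⟨m + 1, le_refl _, hv.symm⟩

/-- A walk from the `n`-th vertex of a walk to its end, whose support is among
the vertices from index `n` on. -/
lemma suffix_walk {V : Type} {G : SimpleGraph V} {a b : V} (p : G.Walk a b) :
    ∀ d n, n + d = p.length → ∃ w : G.Walk (p.getVert n) b,
      ∀ v ∈ w.support, ∃ t, n ≤ t ∧ t ≤ p.length ∧ p.getVert t = v := by
  intro d
  induction d with
  | zero =>
    intro n hn
    have hn' : n = p.length := by omega
    subst hn'
    refine ⟨Walk.nil.copy (p.getVert_length).symm rfl, ?_⟩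
    intro v hv
    rw [Walk.support_copy] at hv
    simp at hv
    exact ⟨p.length, le_refl _, le_refl _, by rw [p.getVert_length, hv]⟩
  | succ d ih =>
    intro n hn
    obtain ⟨w, hw⟩ := ih (n + 1) (by omega)
    refine ⟨Walk.cons (p.adj_getVert_succ (by omega)) w, ?_⟩
    intro v hv
    rw [Walk.support_cons, List.mem_cons] at hv
    rcases hv with hv | hv
    · exact ⟨n, le_refl _, by omega, hv.symm⟩
    · obtain ⟨t, ht1, ht2, hteq⟩ := hw v hv
      exact ⟨t, by omega, ht2, hteq⟩

/-- Chain lemma: if bars of `s` and `t` both contain `x`, there is a walk from `s` to `t`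
all of whose vertices' bars contain `x` with heights between those of `s` and `t`. -/
lemma chain_walk {V : Type} [Fintype V] (G : SimpleGraph V) (l r y : V → ℝ)
    (hinj : ∀ u v : V, u ≠ v →
      (Set.Icc (l u) (r u) ∩ Set.Icc (l v) (r v)).Nonempty → y u ≠ y v)
    (hedge : ∀ u v : V, G.Adj u v ↔ u ≠ v ∧ ∃ x : ℝ,
      x ∈ Set.Icc (l u) (r u) ∧ x ∈ Set.Icc (l v) (r v) ∧
      ∀ w : V, w ≠ u → w ≠ v → x ∈ Set.Icc (l w) (r w) →
        ¬ ((y u < y w ∧ y w < y v) ∨ (y v < y w ∧ y w < y u)))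
    (x : ℝ) :
    ∀ n : ℕ, ∀ s t : V, x ∈ Set.Icc (l s) (r s) → x ∈ Set.Icc (l t) (r t) → y s ≤ y t →
      {v : V | x ∈ Set.Icc (l v) (r v) ∧ y s < y v ∧ y v ≤ y t}.ncard ≤ n →
      ∃ w : G.Walk s t, ∀ v ∈ w.support,
        x ∈ Set.Icc (l v) (r v) ∧ y s ≤ y v ∧ y v ≤ y t := by
  intro n
  induction n with
  | zero =>
    intro s t hxs hxt hst hcard
    by_cases hts : s = t
    · subst hts
      exact ⟨Walk.nil, by intro v hv; simp at hv; subst hv; exact ⟨hxs, le_refl _, le_refl _⟩⟩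
    · exfalso
      have hne : y s ≠ y t := hinj s t hts ⟨x, hxs, hxt⟩
      have hlt : y s < y t := lt_of_le_of_ne hst hne
      have ht : t ∈ {v : V | x ∈ Set.Icc (l v) (r v) ∧ y s < y v ∧ y v ≤ y t} :=
        ⟨hxt, hlt, le_refl _⟩
      have := (Set.ncard_pos (Set.toFinite _)).mpr ⟨t, ht⟩
      omega
  | succ n ih =>
    intro s t hxs hxt hst hcard
    by_cases hts : s = t
    · subst hts
      exact ⟨Walk.nil, by intro v hv; simp at hv; subst hv; exact ⟨hxs, le_refl _, le_refl _⟩⟩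
    · have hne : y s ≠ y t := hinj s t hts ⟨x, hxs, hxt⟩
      have hlt : y s < y t := lt_of_le_of_ne hst hne
      set S := {v : V | x ∈ Set.Icc (l v) (r v) ∧ y s < y v ∧ y v ≤ y t} with hS
      have ht : t ∈ S := ⟨hxt, hlt, le_refl _⟩
      obtain ⟨v, hvS, hvmin⟩ := Set.exists_min_image S y (Set.toFinite _) ⟨t, ht⟩
      obtain ⟨hxv, hsv, hvt⟩ := hvS
      -- s is adjacent to v
      have hadj : G.Adj s v := by
        rw [hedge]
        refine ⟨fun h => by rw [h] at hsv; exact lt_irrefl _ hsv, x, hxs, hxv, ?_⟩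
        intro w hws hwv hxw habs
        rcases habs with ⟨h1, h2⟩ | ⟨h1, h2⟩
        · have hwS : w ∈ S := ⟨hxw, h1, le_trans (le_of_lt h2) hvt⟩
          have := hvmin w hwS
          linarith
        · linarith
      -- recurse from v to t
      have hsub : {w : V | x ∈ Set.Icc (l w) (r w) ∧ y v < y w ∧ y w ≤ y t} ⊂ S := by
        constructor
        · intro w ⟨hw1, hw2, hw3⟩
          exact ⟨hw1, lt_trans hsv hw2, hw3⟩
        · intro hcontra
          have := hcontra ⟨hxv, hsv, hvt⟩
          exact lt_irrefl _ this.2.1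
      have hcard' : {w : V | x ∈ Set.Icc (l w) (r w) ∧ y v < y w ∧ y w ≤ y t}.ncard ≤ n := by
        have := Set.ncard_lt_ncard hsub (Set.toFinite _)
        omega
      obtain ⟨w2, hw2⟩ := ih v t hxv hxt hvt hcard'
      refine ⟨Walk.cons hadj w2, ?_⟩
      intro u hu
      rw [Walk.support_cons, List.mem_cons] at hu
      rcases hu with hu | hu
      · subst hu; exact ⟨hxs, le_refl _, le_of_lt hlt⟩
      · obtain ⟨h1, h2, h3⟩ := hw2 u hu
        exact ⟨h1, le_trans (le_of_lt hsv) h2, h3⟩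

/-- Chain lemma without orientation assumption. -/
lemma chain_walk' {V : Type} [Fintype V] (G : SimpleGraph V) (l r y : V → ℝ)
    (hinj : ∀ u v : V, u ≠ v →
      (Set.Icc (l u) (r u) ∩ Set.Icc (l v) (r v)).Nonempty → y u ≠ y v)
    (hedge : ∀ u v : V, G.Adj u v ↔ u ≠ v ∧ ∃ x : ℝ,
      x ∈ Set.Icc (l u) (r u) ∧ x ∈ Set.Icc (l v) (r v) ∧
      ∀ w : V, w ≠ u → w ≠ v → x ∈ Set.Icc (l w) (r w) →
        ¬ ((y u < y w ∧ y w < y v) ∨ (y v < y w ∧ y w < y u)))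
    (x : ℝ) (s t : V) (hxs : x ∈ Set.Icc (l s) (r s)) (hxt : x ∈ Set.Icc (l t) (r t)) :
    ∃ w : G.Walk s t, ∀ v ∈ w.support,
      x ∈ Set.Icc (l v) (r v) ∧ min (y s) (y t) ≤ y v ∧ y v ≤ max (y s) (y t) := by
  rcases le_total (y s) (y t) with h | h
  · obtain ⟨w, hw⟩ := chain_walk G l r y hinj hedge x _ s t hxs hxt h (le_refl _)
    refine ⟨w, fun v hv => ?_⟩
    obtain ⟨h1, h2, h3⟩ := hw v hv
    exact ⟨h1, le_trans (min_le_left _ _) h2, le_trans h3 (le_max_right _ _)⟩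
  · obtain ⟨w, hw⟩ := chain_walk G l r y hinj hedge x _ t s hxt hxs h (le_refl _)
    refine ⟨w.reverse, fun v hv => ?_⟩
    rw [Walk.support_reverse, List.mem_reverse] at hv
    obtain ⟨h1, h2, h3⟩ := hw v hv
    exact ⟨h1, le_trans (min_le_right _ _) h2, le_trans h3 (le_max_left _ _)⟩

/-- Property 2 (NextBarsSameSide): if `u1, …, uℓ` is the unique path between its
endpoints and the bars of `ui` and `uk` are both above or both below the bar of `uj`
(`i < j < k`), then the x-projections of `{u1,…,ui}` and `{uk,…,uℓ}` are disjoint. -/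
theorem stmt_2 {V : Type} [Fintype V] [DecidableEq V]
    (G : SimpleGraph V) (l r y : V → ℝ) (hlr : ∀ v, l v ≤ r v)
    (hinj : ∀ u v : V, u ≠ v →
      (Set.Icc (l u) (r u) ∩ Set.Icc (l v) (r v)).Nonempty → y u ≠ y v)
    (hedge : ∀ u v : V, G.Adj u v ↔ u ≠ v ∧ ∃ x : ℝ,
      x ∈ Set.Icc (l u) (r u) ∧ x ∈ Set.Icc (l v) (r v) ∧
      ∀ w : V, w ≠ u → w ≠ v → x ∈ Set.Icc (l w) (r w) →
        ¬ ((y u < y w ∧ y w < y v) ∨ (y v < y w ∧ y w < y u)))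
    {a b : V} (p : G.Walk a b) (hp : p.IsPath)
    (huniq : ∀ q : G.Walk a b, q.IsPath → q = p)
    (i j k : ℕ) (hij : i < j) (hjk : j < k) (hk : k ≤ p.length)
    (hy : (y (p.getVert i) > y (p.getVert j) ∧ y (p.getVert k) > y (p.getVert j)) ∨
          (y (p.getVert i) < y (p.getVert j) ∧ y (p.getVert k) < y (p.getVert j))) :
    (⋃ m ∈ Set.Iic i, Set.Icc (l (p.getVert m)) (r (p.getVert m))) ∩
      (⋃ m ∈ Set.Icc k p.length, Set.Icc (l (p.getVert m)) (r (p.getVert m))) = ∅ := by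
  rw [Set.eq_empty_iff_forall_notMem]
  rintro x ⟨hx1, hx2⟩
  simp only [Set.mem_iUnion, Set.mem_Iic, Set.mem_Icc] at hx1 hx2
  obtain ⟨m, hm, hxm⟩ := hx1
  obtain ⟨n, ⟨hkn, hnl⟩, hxn⟩ := hx2
  have hginj := path_getVert_inj p hp
  have hil : i ≤ p.length := by omega
  have hjl : j ≤ p.length := by omega
  -- Step A: derive that x ∈ X(u_i) and x ∈ X(u_k)
  obtain ⟨wpre, hwpre⟩ := prefix_walk p m (by omega)
  obtain ⟨wsuf, hwsuf⟩ := suffix_walk p (p.length - n) n (by omega)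
  obtain ⟨wchn, hwchn⟩ := chain_walk' G l r y hinj hedge x _ _ hxm hxn
  set W := wpre.append (wchn.append wsuf) with hW
  have hWp : W.bypass = p := huniq W.bypass W.bypass_isPath
  have hsupp : ∀ u ∈ p.support, u ∈ W.support := by
    intro u hu
    rw [← hWp] at hu
    exact W.support_bypass_subset hu
  have key : ∀ t : ℕ, m ≤ t → t ≤ n → t ≤ p.length →
      x ∈ Set.Icc (l (p.getVert t)) (r (p.getVert t)) := by
    intro t hmt htn htl
    have hmem : p.getVert t ∈ W.support :=
      hsupp _ (Walk.mem_support_iff_exists_getVert.mpr ⟨t, rfl, htl⟩)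
    rw [hW, Walk.mem_support_append_iff, Walk.mem_support_append_iff] at hmem
    rcases hmem with hmem | hmem | hmem
    · obtain ⟨s, hsm, hseq⟩ := hwpre _ hmem
      have : s = t := hginj s t (by omega) htl hseq
      have : t = m := by omega
      subst this
      exact hxm
    · exact (hwchn _ hmem).1
    · obtain ⟨s, hns, hsl, hseq⟩ := hwsuf _ hmem
      have : s = t := hginj s t hsl htl hseq
      have : t = n := by omega
      subst this
      exact hxn
  have hxi : x ∈ Set.Icc (l (p.getVert i)) (r (p.getVert i)) := key i hm (by omega) hil
  have hxk : x ∈ Set.Icc (l (p.getVert k)) (r (p.getVert k)) := key k (by omega) hkn hk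
  -- Step B: build a walk avoiding u_j, contradicting path uniqueness
  obtain ⟨wpre2, hwpre2⟩ := prefix_walk p i hil
  obtain ⟨wsuf2, hwsuf2⟩ := suffix_walk p (p.length - k) k (by omega)
  obtain ⟨wchn2, hwchn2⟩ := chain_walk' G l r y hinj hedge x _ _ hxi hxk
  set W2 := wpre2.append (wchn2.append wsuf2) with hW2
  have hW2p : W2.bypass = p := huniq W2.bypass W2.bypass_isPath
  have hjmem : p.getVert j ∈ W2.support := by
    refine W2.support_bypass_subset ?_
    rw [hW2p]
    exact Walk.mem_support_iff_exists_getVert.mpr ⟨j, rfl, hjl⟩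
  rw [hW2, Walk.mem_support_append_iff, Walk.mem_support_append_iff] at hjmem
  rcases hjmem with hmem | hmem | hmem
  · obtain ⟨s, hsi, hseq⟩ := hwpre2 _ hmem
    have : s = j := hginj s j (by omega) hjl hseq
    omega
  · obtain ⟨h1, h2, h3⟩ := hwchn2 _ hmem
    rcases hy with ⟨ha, hb⟩ | ⟨ha, hb⟩
    · have := lt_min ha hb
      linarith
    · have := max_lt ha hb
      linarith [h3]
  · obtain ⟨s, hks, hsl, hseq⟩ := hwsuf2 _ hmem
    have : s = j := hginj s j hsl hjl hseq
    omega
end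

section
/- Let Γ be a bar visibility representation of a connected finite graph G = (V,E), and let u ∈ V be a cut vertex whose removal creates connected components C1, …, Ck. Then X(Ci) ⊄ X(u) (i.e., X(Ci) is not contained in X(u)) for at most two of the components Ci, where X(Ci) = ⋃_{v∈Ci} X(v). -/
open SimpleGraph

lemma auxA {V : Type} [Fintype V]
    (G : SimpleGraph V) (l r y : V → ℝ)
    (hedge : ∀ u v : V, G.Adj u v ↔ u ≠ v ∧ ∃ x : ℝ,
      x ∈ Set.Icc (l u) (r u) ∧ x ∈ Set.Icc (l v) (r v) ∧
      ∀ w : V, w ≠ u → w ≠ v → x ∈ Set.Icc (l w) (r w) →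
        ¬ ((y u < y w ∧ y w < y v) ∨ (y v < y w ∧ y w < y u)))
    (u : V) (x : ℝ) (hxu : x ∉ Set.Icc (l u) (r u)) :
    ∀ (a b : V) (ha : a ≠ u) (hb : b ≠ u), x ∈ Set.Icc (l a) (r a) → x ∈ Set.Icc (l b) (r b) →
      (G.induce {v : V | v ≠ u}).connectedComponentMk ⟨a, ha⟩ =
      (G.induce {v : V | v ≠ u}).connectedComponentMk ⟨b, hb⟩ := by
  classical
  set F : V → V → Finset V := fun a b =>
    Finset.univ.filter (fun w => w ≠ u ∧ x ∈ Set.Icc (l w) (r w) ∧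
      ((y a < y w ∧ y w < y b) ∨ (y b < y w ∧ y w < y a))) with hF
  have hbase : ∀ (a b : V) (ha : a ≠ u) (hb : b ≠ u), x ∈ Set.Icc (l a) (r a) →
      x ∈ Set.Icc (l b) (r b) → F a b = ∅ →
      (G.induce {v : V | v ≠ u}).connectedComponentMk ⟨a, ha⟩ =
      (G.induce {v : V | v ≠ u}).connectedComponentMk ⟨b, hb⟩ := by
    intro a b ha hb hxa hxb hemp
    by_cases hab : a = b
    · subst hab; rfl
    · have hadj : G.Adj a b := (hedge a b).2 ⟨hab, x, hxa, hxb, fun w hwa hwb hxw hbet => by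
        have hwu : w ≠ u := fun h => hxu (h ▸ hxw)
        have : w ∈ F a b := by
          rw [hF]; simp only [Finset.mem_filter, Finset.mem_univ, true_and]
          exact ⟨hwu, hxw, hbet⟩
        rw [hemp] at this
        exact Finset.notMem_empty _ this⟩
      exact SimpleGraph.ConnectedComponent.connectedComponentMk_eq_of_adj
        (show (G.induce {v : V | v ≠ u}).Adj ⟨a, ha⟩ ⟨b, hb⟩ from hadj)
  suffices key : ∀ (n : ℕ) (a b : V) (ha : a ≠ u) (hb : b ≠ u), x ∈ Set.Icc (l a) (r a) →
      x ∈ Set.Icc (l b) (r b) → (F a b).card ≤ n →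
      (G.induce {v : V | v ≠ u}).connectedComponentMk ⟨a, ha⟩ =
      (G.induce {v : V | v ≠ u}).connectedComponentMk ⟨b, hb⟩ by
    intro a b ha hb hxa hxb
    exact key (F a b).card a b ha hb hxa hxb le_rfl
  intro n
  induction n with
  | zero =>
    intro a b ha hb hxa hxb hcard
    exact hbase a b ha hb hxa hxb (Finset.card_eq_zero.mp (Nat.le_zero.mp hcard))
  | succ n ih =>
    intro a b ha hb hxa hxb hcard
    rcases Finset.eq_empty_or_nonempty (F a b) with hemp | ⟨w, hw⟩
    · exact hbase a b ha hb hxa hxb hemp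
    · rw [hF] at hw
      simp only [Finset.mem_filter, Finset.mem_univ, true_and] at hw
      obtain ⟨hwu, hxw, hwbet⟩ := hw
      have hw' : w ∈ F a b := by
        rw [hF]; simp only [Finset.mem_filter, Finset.mem_univ, true_and]
        exact ⟨hwu, hxw, hwbet⟩
      have hsub1 : F a w ⊆ (F a b).erase w := by
        intro v hv
        rw [hF] at hv ⊢
        simp only [Finset.mem_filter, Finset.mem_univ, true_and, Finset.mem_erase] at hv ⊢
        obtain ⟨hvu, hxv, hvbet⟩ := hv
        constructor
        · intro hvw; subst hvw
          rcases hvbet with ⟨h1, h2⟩ | ⟨h1, h2⟩ <;> linarith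
        · refine ⟨hvu, hxv, ?_⟩
          rcases hvbet with ⟨h1, h2⟩ | ⟨h1, h2⟩ <;> rcases hwbet with ⟨h3, h4⟩ | ⟨h3, h4⟩ <;>
            first
              | (left; exact ⟨by linarith, by linarith⟩)
              | (right; exact ⟨by linarith, by linarith⟩)
              | (exfalso; linarith)
      have hsub2 : F w b ⊆ (F a b).erase w := by
        intro v hv
        rw [hF] at hv ⊢
        simp only [Finset.mem_filter, Finset.mem_univ, true_and, Finset.mem_erase] at hv ⊢
        obtain ⟨hvu, hxv, hvbet⟩ := hv
        constructor
        · intro hvw; subst hvw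
          rcases hvbet with ⟨h1, h2⟩ | ⟨h1, h2⟩ <;> linarith
        · refine ⟨hvu, hxv, ?_⟩
          rcases hvbet with ⟨h1, h2⟩ | ⟨h1, h2⟩ <;> rcases hwbet with ⟨h3, h4⟩ | ⟨h3, h4⟩ <;>
            first
              | (left; exact ⟨by linarith, by linarith⟩)
              | (right; exact ⟨by linarith, by linarith⟩)
              | (exfalso; linarith)
      have hcard1 : (F a w).card ≤ n := by
        have := Finset.card_le_card hsub1
        rw [Finset.card_erase_of_mem hw'] at this
        omega
      have hcard2 : (F w b).card ≤ n := by
        have := Finset.card_le_card hsub2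
        rw [Finset.card_erase_of_mem hw'] at this
        omega
      exact (ih a w ha hwu hxa hxw hcard1).trans (ih w b hwu hb hxw hxb hcard2)
open SimpleGraph

lemma auxRTG {W : Type} {H : SimpleGraph W} (C : H.ConnectedComponent) :
    ∀ {a b : W}, Relation.ReflTransGen H.Adj a b → a ∈ C.supp →
      Relation.ReflTransGen (fun p q : W => H.Adj p q ∧ p ∈ C.supp) a b := by
  intro a b h ha
  induction h with
  | refl => exact .refl
  | @tail b' c hab hbc ih =>
    refine ih.tail ⟨hbc, ?_⟩
    rw [SimpleGraph.ConnectedComponent.mem_supp_iff] at ha ⊢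
    rw [← ha]
    exact (SimpleGraph.ConnectedComponent.sound
      ((SimpleGraph.reachable_iff_reflTransGen _ _).mpr hab)).symm

lemma auxTouch {V : Type} (G : SimpleGraph V) (u0 : V) :
    ∀ {v w : V} (_ : G.Walk v w), w = u0 → ∀ (hv : v ≠ u0),
    ∃ (z : V) (hz : z ≠ u0), (G.induce {x : V | x ≠ u0}).Reachable ⟨v, hv⟩ ⟨z, hz⟩ ∧ G.Adj z u0 := by
  intro v w p
  induction p with
  | nil => intro h hv; exact absurd h hv
  | @cons a b c h q ih =>
    intro hc ha
    subst hc
    by_cases hb : b = c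
    · exact ⟨a, ha, Reachable.refl _, hb ▸ h⟩
    · obtain ⟨z, hz, hr, hadj⟩ := ih rfl hb
      exact ⟨z, hz, Reachable.trans
        (SimpleGraph.Adj.reachable
          (show (G.induce {x : V | x ≠ c}).Adj ⟨a, ha⟩ ⟨b, hb⟩ from h)) hr, hadj⟩

/-- Lemma 1 (Nestedness): if `u` is a cut vertex of a connected graph with a bar
visibility representation, then at most two of the connected components of `G − u`
have x-projection not contained in the x-projection of `u`. -/
theorem stmt_3 {V : Type} [Fintype V] [DecidableEq V]
    (G : SimpleGraph V) (l r y : V → ℝ) (hlr : ∀ v, l v ≤ r v)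
    (hinj : ∀ u v : V, u ≠ v →
      (Set.Icc (l u) (r u) ∩ Set.Icc (l v) (r v)).Nonempty → y u ≠ y v)
    (hedge : ∀ u v : V, G.Adj u v ↔ u ≠ v ∧ ∃ x : ℝ,
      x ∈ Set.Icc (l u) (r u) ∧ x ∈ Set.Icc (l v) (r v) ∧
      ∀ w : V, w ≠ u → w ≠ v → x ∈ Set.Icc (l w) (r w) →
        ¬ ((y u < y w ∧ y w < y v) ∨ (y v < y w ∧ y w < y u)))
    (hconn : G.Connected) (u : V)
    (hcut : ¬ (G.induce {v : V | v ≠ u}).Connected) :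
    {C : (G.induce {v : V | v ≠ u}).ConnectedComponent |
      ¬ (⋃ v ∈ C.supp, Set.Icc (l v.1) (r v.1)) ⊆ Set.Icc (l u) (r u)}.ncard ≤ 2 := by
  classical
  set H := G.induce {v : V | v ≠ u} with hH
  set Xc : H.ConnectedComponent → Set ℝ :=
    fun C => ⋃ v ∈ C.supp, Set.Icc (l v.1) (r v.1) with hXc
  -- two components sharing a point outside X(u) are equal
  have hsame : ∀ (C₁ C₂ : H.ConnectedComponent) (x : ℝ), x ∉ Set.Icc (l u) (r u) →
      x ∈ Xc C₁ → x ∈ Xc C₂ → C₁ = C₂ := by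
    intro C₁ C₂ x hx h1 h2
    rw [hXc] at h1 h2
    obtain ⟨v₁, hv1s, hx1⟩ := Set.mem_iUnion₂.1 h1
    obtain ⟨v₂, hv2s, hx2⟩ := Set.mem_iUnion₂.1 h2
    have hmk := auxA G l r y hedge u x hx v₁.1 v₂.1 v₁.2 v₂.2 hx1 hx2
    rw [SimpleGraph.ConnectedComponent.mem_supp_iff] at hv1s hv2s
    rw [← hv1s, ← hv2s]
    exact hmk
  -- every component's projection touches X(u)
  have htouch : ∀ C : H.ConnectedComponent, ∃ p, p ∈ Xc C ∧ p ∈ Set.Icc (l u) (r u) := by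
    intro C
    obtain ⟨v₀, hv₀⟩ := C.exists_rep
    obtain ⟨pwalk⟩ := hconn.preconnected v₀.1 u
    obtain ⟨z, hz, hr, hadj⟩ := auxTouch G u pwalk rfl v₀.2
    obtain ⟨-, x', hx'z, hx'u, -⟩ := (hedge z u).1 hadj
    refine ⟨x', ?_, hx'u⟩
    rw [hXc]
    have hzs : (⟨z, hz⟩ : {v : V | v ≠ u}) ∈ C.supp := by
      rw [SimpleGraph.ConnectedComponent.mem_supp_iff, ← hv₀]
      exact SimpleGraph.ConnectedComponent.sound hr.symm
    exact Set.mem_biUnion hzs hx'z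
  -- each component's projection is order-connected
  have hOC : ∀ C : H.ConnectedComponent, Set.OrdConnected (Xc C) := by
    intro C
    refine IsPreconnected.ordConnected ?_
    rw [hXc]
    refine IsPreconnected.biUnion_of_reflTransGen (fun i _ => isPreconnected_Icc) ?_
    intro i hi j hj
    have hreach : H.Reachable i j := by
      rw [SimpleGraph.ConnectedComponent.mem_supp_iff] at hi hj
      exact SimpleGraph.ConnectedComponent.exact (hi.trans hj.symm)
    have hrtg := auxRTG C ((SimpleGraph.reachable_iff_reflTransGen _ _).1 hreach) hi
    refine Relation.ReflTransGen.mono ?_ _ _ hrtg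
    rintro p q ⟨hpq, hps⟩
    obtain ⟨-, x', hx'p, hx'q, -⟩ := (hedge p.1 q.1).1 hpq
    exact ⟨⟨x', hx'p, hx'q⟩, hps⟩
  -- bound by injection into Bool
  refine le_trans (Set.ncard_le_ncard_of_injOn
    (fun C => decide (∃ x ∈ Xc C, x < l u)) (fun a _ => Set.mem_univ _) ?_ Set.finite_univ) ?_
  · intro C₁ hC₁ C₂ hC₂ heq
    simp only [Set.mem_setOf_eq] at hC₁ hC₂
    obtain ⟨x₁, hx₁m, hx₁⟩ := Set.not_subset.1 hC₁
    obtain ⟨x₂, hx₂m, hx₂⟩ := Set.not_subset.1 hC₂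
    obtain ⟨p₁, hp₁m, hp₁⟩ := htouch C₁
    obtain ⟨p₂, hp₂m, hp₂⟩ := htouch C₂
    have heq' : (∃ x ∈ Xc C₁, x < l u) ↔ (∃ x ∈ Xc C₂, x < l u) := by
      have := decide_eq_decide.1 heq
      exact this
    rw [Set.mem_Icc, not_and_or, not_le, not_le] at hx₁ hx₂
    rw [Set.mem_Icc] at hp₁ hp₂
    by_cases hP : ∃ x ∈ Xc C₁, x < l u
    · obtain ⟨z₁, hz₁m, hz₁⟩ := hP
      obtain ⟨z₂, hz₂m, hz₂⟩ := heq'.1 ⟨z₁, hz₁m, hz₁⟩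
      set t := max z₁ z₂ with ht
      have htl : t < l u := max_lt hz₁ hz₂
      have ht1 : t ∈ Xc C₁ :=
        (hOC C₁).out hz₁m hp₁m ⟨le_max_left _ _, by linarith [hp₁.1]⟩
      have ht2 : t ∈ Xc C₂ :=
        (hOC C₂).out hz₂m hp₂m ⟨le_max_right _ _, by linarith [hp₂.1]⟩
      refine hsame C₁ C₂ t ?_ ht1 ht2
      rw [Set.mem_Icc]
      rintro ⟨h, -⟩; linarith
    · have hx₁r : r u < x₁ := by
        rcases hx₁ with h | h
        · exact absurd ⟨x₁, hx₁m, h⟩ hP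
        · exact h
      have hx₂r : r u < x₂ := by
        rcases hx₂ with h | h
        · exact absurd ⟨x₂, hx₂m, h⟩ (fun hc => hP (heq'.2 hc))
        · exact h
      set t := min x₁ x₂ with ht
      have htr : r u < t := lt_min hx₁r hx₂r
      have ht1 : t ∈ Xc C₁ :=
        (hOC C₁).out hp₁m hx₁m ⟨by linarith [hp₁.2], min_le_left _ _⟩
      have ht2 : t ∈ Xc C₂ :=
        (hOC C₂).out hp₂m hx₂m ⟨by linarith [hp₂.2], min_le_right _ _⟩
      refine hsame C₁ C₂ t ?_ ht1 ht2
      rw [Set.mem_Icc]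
      rintro ⟨-, h⟩; linarith
  · rw [Set.ncard_univ]
    simp
end

section
/- Let Γ be a bar visibility representation of a finite graph G = (V,E), and let C1 and C2 be distinct connected components of G. Then either every point of X(C1) is strictly greater than every point of X(C2), or every point of X(C2) is strictly greater than every point of X(C1), where X(Ci) = ⋃_{v∈Ci} X(v). In particular X(C1) ∩ X(C2) = ∅. -/
/-- Lemma 2 (NoTwist): the x-projections of two distinct connected components of a
graph with a bar visibility representation are strictly separated (one lies entirely
to the right of the other); in particular they are disjoint. -/
theorem stmt_4 {V : Type} [Fintype V] [DecidableEq V]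
    (G : SimpleGraph V) (l r y : V → ℝ) (hlr : ∀ v, l v ≤ r v)
    (hinj : ∀ u v : V, u ≠ v →
      (Set.Icc (l u) (r u) ∩ Set.Icc (l v) (r v)).Nonempty → y u ≠ y v)
    (hedge : ∀ u v : V, G.Adj u v ↔ u ≠ v ∧ ∃ x : ℝ,
      x ∈ Set.Icc (l u) (r u) ∧ x ∈ Set.Icc (l v) (r v) ∧
      ∀ w : V, w ≠ u → w ≠ v → x ∈ Set.Icc (l w) (r w) →
        ¬ ((y u < y w ∧ y w < y v) ∨ (y v < y w ∧ y w < y u)))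
    (C1 C2 : G.ConnectedComponent) (hC : C1 ≠ C2) :
    ((∀ p ∈ ⋃ v ∈ C1.supp, Set.Icc (l v) (r v),
        ∀ q ∈ ⋃ v ∈ C2.supp, Set.Icc (l v) (r v), q < p) ∨
     (∀ p ∈ ⋃ v ∈ C1.supp, Set.Icc (l v) (r v),
        ∀ q ∈ ⋃ v ∈ C2.supp, Set.Icc (l v) (r v), p < q)) ∧
    (⋃ v ∈ C1.supp, Set.Icc (l v) (r v)) ∩ (⋃ v ∈ C2.supp, Set.Icc (l v) (r v)) = ∅ := by
  classical
  -- Key: if the bars of u and v share an x-coordinate, then u and v are reachable.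
  have key : ∀ n : ℕ, ∀ u v : V, ∀ x : ℝ, x ∈ Set.Icc (l u) (r u) → x ∈ Set.Icc (l v) (r v) →
      ({w : V | x ∈ Set.Icc (l w) (r w) ∧
        ((y u < y w ∧ y w < y v) ∨ (y v < y w ∧ y w < y u))}).ncard ≤ n →
      G.Reachable u v := by
    intro n
    induction n with
    | zero =>
      intro u v x hu hv hcard
      rcases eq_or_ne u v with rfl | huv
      · exact SimpleGraph.Reachable.refl u
      · have hempty : {w : V | x ∈ Set.Icc (l w) (r w) ∧
            ((y u < y w ∧ y w < y v) ∨ (y v < y w ∧ y w < y u))} = ∅ := by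
          have hfin : {w : V | x ∈ Set.Icc (l w) (r w) ∧
              ((y u < y w ∧ y w < y v) ∨ (y v < y w ∧ y w < y u))}.Finite := Set.toFinite _
          rcases Set.eq_empty_or_nonempty _ with h | h
          · exact h
          · exfalso
            have := Set.ncard_pos hfin |>.mpr h
            omega
        have hadj : G.Adj u v := by
          rw [hedge]
          refine ⟨huv, x, hu, hv, ?_⟩
          intro w _ _ hw hbet
          have : w ∈ ({w : V | x ∈ Set.Icc (l w) (r w) ∧
              ((y u < y w ∧ y w < y v) ∨ (y v < y w ∧ y w < y u))}) := ⟨hw, hbet⟩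
          rw [hempty] at this
          exact this
        exact hadj.reachable
    | succ n ih =>
      intro u v x hu hv hcard
      rcases eq_or_ne u v with rfl | huv
      · exact SimpleGraph.Reachable.refl u
      set S := {w : V | x ∈ Set.Icc (l w) (r w) ∧
        ((y u < y w ∧ y w < y v) ∨ (y v < y w ∧ y w < y u))} with hS
      rcases Set.eq_empty_or_nonempty S with hempty | ⟨w, hwS⟩
      · -- adjacent
        have hadj : G.Adj u v := by
          rw [hedge]
          refine ⟨huv, x, hu, hv, ?_⟩
          intro w _ _ hw hbet
          have : w ∈ S := ⟨hw, hbet⟩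
          rw [hempty] at this
          exact this
        exact hadj.reachable
      · obtain ⟨hwx, hwbet⟩ := hwS
        have hfin : S.Finite := Set.toFinite _
        -- the between-sets for (u,w) and (w,v) are subsets of S \ {w}
        have hwu : y w ≠ y u := fun h => by
          rcases hwbet with ⟨h1, h2⟩ | ⟨h1, h2⟩ <;> linarith [h.le, h.ge]
        have hwv : y w ≠ y v := fun h => by
          rcases hwbet with ⟨h1, h2⟩ | ⟨h1, h2⟩ <;> linarith [h.le, h.ge]
        have hsub1 : {z : V | x ∈ Set.Icc (l z) (r z) ∧
            ((y u < y z ∧ y z < y w) ∨ (y w < y z ∧ y z < y u))} ⊆ S \ {w} := by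
          rintro z ⟨hz, hb⟩
          refine ⟨⟨hz, ?_⟩, ?_⟩
          · rcases hwbet with ⟨h1, h2⟩ | ⟨h1, h2⟩ <;> rcases hb with ⟨h3, h4⟩ | ⟨h3, h4⟩
            · exact Or.inl ⟨h3, by linarith⟩
            · exact absurd h4 (by simp; linarith)
            · exact absurd h3 (by simp; linarith)
            · exact Or.inr ⟨by linarith, h4⟩
          · intro hzw
            simp only [Set.mem_singleton_iff] at hzw
            subst hzw
            rcases hb with ⟨h3, h4⟩ | ⟨h3, h4⟩ <;> linarith
        have hsub2 : {z : V | x ∈ Set.Icc (l z) (r z) ∧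
            ((y w < y z ∧ y z < y v) ∨ (y v < y z ∧ y z < y w))} ⊆ S \ {w} := by
          rintro z ⟨hz, hb⟩
          refine ⟨⟨hz, ?_⟩, ?_⟩
          · rcases hwbet with ⟨h1, h2⟩ | ⟨h1, h2⟩ <;> rcases hb with ⟨h3, h4⟩ | ⟨h3, h4⟩
            · exact Or.inl ⟨by linarith, h4⟩
            · exact absurd h3 (by simp; linarith)
            · exact absurd h4 (by simp; linarith)
            · exact Or.inr ⟨h3, by linarith⟩
          · intro hzw
            simp only [Set.mem_singleton_iff] at hzw
            subst hzw
            rcases hb with ⟨h3, h4⟩ | ⟨h3, h4⟩ <;> linarith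
        have hle : (S \ {w}).ncard ≤ n := by
          have h1 : (S \ {w}).ncard < S.ncard :=
            Set.ncard_diff_singleton_lt_of_mem ⟨hwx, hwbet⟩ hfin
          omega
        have h1 : G.Reachable u w :=
          ih u w x hu hwx (le_trans (Set.ncard_le_ncard hsub1 hfin.diff) hle)
        have h2 : G.Reachable w v :=
          ih w v x hwx hv (le_trans (Set.ncard_le_ncard hsub2 hfin.diff) hle)
        exact h1.trans h2
  have reach : ∀ u v : V, ∀ x : ℝ, x ∈ Set.Icc (l u) (r u) → x ∈ Set.Icc (l v) (r v) →
      G.Reachable u v := fun u v x hu hv =>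
    key _ u v x hu hv le_rfl
  -- Disjointness
  have hdisj : (⋃ v ∈ C1.supp, Set.Icc (l v) (r v)) ∩
      (⋃ v ∈ C2.supp, Set.Icc (l v) (r v)) = ∅ := by
    ext p
    simp only [Set.mem_inter_iff, Set.mem_iUnion, Set.mem_empty_iff_false, iff_false]
    rintro ⟨⟨u, hu, hpu⟩, ⟨v, hv, hpv⟩⟩
    have hr := reach u v p hpu hpv
    rw [SimpleGraph.ConnectedComponent.mem_supp_iff] at hu hv
    exact hC (hu ▸ hv ▸ (SimpleGraph.ConnectedComponent.sound hr))
  refine ⟨?_, hdisj⟩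
  -- Each component's projection is preconnected
  have hpre : ∀ C : G.ConnectedComponent,
      IsPreconnected (⋃ v ∈ C.supp, Set.Icc (l v) (r v)) := by
    intro C
    apply IsPreconnected.biUnion_of_reflTransGen (fun i _ => isPreconnected_Icc)
    intro i hi j hj
    rw [SimpleGraph.ConnectedComponent.mem_supp_iff] at hi hj
    have hreach : G.Reachable i j := SimpleGraph.ConnectedComponent.exact (hi.trans hj.symm)
    obtain ⟨p⟩ := hreach
    clear hj
    induction p with
    | nil => exact Relation.ReflTransGen.refl
    | @cons a b c hab pbc ihp =>
      have hb : G.connectedComponentMk b = C := by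
        rw [← hi]
        exact (SimpleGraph.ConnectedComponent.sound hab.reachable).symm
      refine Relation.ReflTransGen.head ⟨?_, hi⟩ (ihp hb)
      obtain ⟨_, x, hx1, hx2, _⟩ := (hedge a b).mp hab
      exact ⟨x, hx1, hx2⟩
  -- Strict separation from disjointness + preconnectedness
  by_contra hcon
  push_neg at hcon
  obtain ⟨⟨p1, hp1, q1, hq1, hpq1⟩, ⟨p2, hp2, q2, hq2, hpq2⟩⟩ := hcon
  have hne1 : p1 ≠ q1 := by
    rintro rfl
    exact absurd (hdisj ▸ ⟨hp1, hq1⟩ : p1 ∈ (∅ : Set ℝ)) (Set.notMem_empty _)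
  have hne2 : q2 ≠ p2 := by
    rintro rfl
    exact absurd (hdisj ▸ ⟨hp2, hq2⟩ : q2 ∈ (∅ : Set ℝ)) (Set.notMem_empty _)
  rcases le_total q1 p2 with h | h
  · have : q1 ∈ ⋃ v ∈ C1.supp, Set.Icc (l v) (r v) :=
      (hpre C1).ordConnected.out hp1 hp2 ⟨hpq1, h⟩
    exact absurd (hdisj ▸ ⟨this, hq1⟩ : q1 ∈ (∅ : Set ℝ)) (Set.notMem_empty _)
  · have : p2 ∈ ⋃ v ∈ C2.supp, Set.Icc (l v) (r v) :=
      (hpre C2).ordConnected.out hq2 hq1 ⟨hpq2, h⟩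
    exact absurd (hdisj ▸ ⟨hp2, this⟩ : p2 ∈ (∅ : Set ℝ)) (Set.notMem_empty _)
end

section
/- Let Γ be a bar visibility representation of a graph G = (V,E), and suppose u, v, w ∈ V are distinct vertices such that some endpoint of the interval X(w) lies in the interior of X(u) ∩ X(v), and y(u) < y(w) < y(v). Then G contains a cycle. -/
private lemma pathAt {V : Type} [Fintype V]
    (G : SimpleGraph V) (l r y : V → ℝ)
    (hedge : ∀ u v : V, G.Adj u v ↔ u ≠ v ∧ ∃ x : ℝ,
      x ∈ Set.Icc (l u) (r u) ∧ x ∈ Set.Icc (l v) (r v) ∧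
      ∀ w : V, w ≠ u → w ≠ v → x ∈ Set.Icc (l w) (r w) →
        ¬ ((y u < y w ∧ y w < y v) ∨ (y v < y w ∧ y w < y u)))
    (x : ℝ) :
    ∀ (n : ℕ) (u v : V), x ∈ Set.Icc (l u) (r u) → x ∈ Set.Icc (l v) (r v) → y u < y v →
      {c : V | x ∈ Set.Icc (l c) (r c) ∧ y u < y c ∧ y c < y v}.ncard ≤ n →
      ∃ p : G.Walk u v, p.IsPath ∧
        ∀ c ∈ p.support, x ∈ Set.Icc (l c) (r c) ∧ y u ≤ y c ∧ y c ≤ y v := by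
  intro n
  induction n with
  | zero =>
    intro u v hu hv hyuv hcard
    have hemp : {c : V | x ∈ Set.Icc (l c) (r c) ∧ y u < y c ∧ y c < y v} = ∅ := by
      rw [← Set.ncard_eq_zero (Set.toFinite _)]
      omega
    have hne : u ≠ v := fun h => absurd (h ▸ hyuv) (lt_irrefl _)
    have hadj : G.Adj u v := by
      rw [hedge]
      refine ⟨hne, x, hu, hv, fun c hcu hcv hcx hbad => ?_⟩
      rcases hbad with ⟨h1, h2⟩ | ⟨h1, h2⟩
      · have : c ∈ {c : V | x ∈ Set.Icc (l c) (r c) ∧ y u < y c ∧ y c < y v} := ⟨hcx, h1, h2⟩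
        rw [hemp] at this; exact this
      · exact absurd (hyuv.trans (h1.trans h2)) (lt_irrefl _)
    refine ⟨SimpleGraph.Walk.cons hadj SimpleGraph.Walk.nil, ?_, ?_⟩
    · simp [SimpleGraph.Walk.isPath_def, hne]
    · intro c hc
      simp only [SimpleGraph.Walk.support_cons, SimpleGraph.Walk.support_nil,
        List.mem_cons, List.mem_singleton] at hc
      rcases hc with rfl | rfl | h
      · exact ⟨hu, le_refl _, le_of_lt hyuv⟩
      · exact ⟨hv, le_of_lt hyuv, le_refl _⟩
      · exact absurd h List.not_mem_nil
  | succ n ih =>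
    intro u v hu hv hyuv hcard
    set S := {c : V | x ∈ Set.Icc (l c) (r c) ∧ y u < y c ∧ y c < y v} with hS
    by_cases hSne : S.Nonempty
    · obtain ⟨c, hcS, hcmin⟩ := Set.exists_min_image S y (Set.toFinite S) hSne
      obtain ⟨hcx, hyuc, hycv⟩ := hcS
      -- the set between c and v is strictly smaller
      have hsub : {d : V | x ∈ Set.Icc (l d) (r d) ∧ y c < y d ∧ y d < y v} ⊂ S := by
        constructor
        · rintro d ⟨hdx, h1, h2⟩
          exact ⟨hdx, hyuc.trans h1, h2⟩
        · intro hle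
          have : c ∈ {d : V | x ∈ Set.Icc (l d) (r d) ∧ y c < y d ∧ y d < y v} :=
            hle ⟨hcx, hyuc, hycv⟩
          exact absurd this.2.1 (lt_irrefl _)
      have hcard' : {d : V | x ∈ Set.Icc (l d) (r d) ∧ y c < y d ∧ y d < y v}.ncard ≤ n := by
        have := Set.ncard_lt_ncard hsub (Set.toFinite S)
        omega
      obtain ⟨p, hp, hpsupp⟩ := ih c v hcx hv hycv hcard'
      have hneuc : u ≠ c := fun h => absurd (h ▸ hyuc) (lt_irrefl _)
      have hadj : G.Adj u c := by
        rw [hedge]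
        refine ⟨hneuc, x, hu, hcx, fun d hdu hdc hdx hbad => ?_⟩
        rcases hbad with ⟨h1, h2⟩ | ⟨h1, h2⟩
        · have hdS : d ∈ S := ⟨hdx, h1, h2.trans hycv⟩
          exact absurd (hcmin d hdS) (not_le.mpr h2)
        · exact absurd (hyuc.trans (h1.trans h2)) (lt_irrefl _)
      have hunot : u ∉ p.support := by
        intro hmem
        exact absurd (hpsupp u hmem).2.1 (not_le.mpr hyuc)
      refine ⟨SimpleGraph.Walk.cons hadj p, hp.cons hunot, ?_⟩
      intro d hd
      simp only [SimpleGraph.Walk.support_cons, List.mem_cons] at hd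
      rcases hd with rfl | hd
      · exact ⟨hu, le_refl _, le_of_lt hyuv⟩
      · obtain ⟨h1, h2, h3⟩ := hpsupp d hd
        exact ⟨h1, le_of_lt (lt_of_lt_of_le hyuc h2), h3⟩
    · -- S empty: direct edge
      rw [Set.not_nonempty_iff_eq_empty] at hSne
      have h0 : S.ncard = 0 := by rw [hSne]; simp
      rw [hS] at h0
      exact ih u v hu hv hyuv (by omega)

/-- Property 3 (cycle): if an endpoint of the bar of `w` lies strictly inside the
intersection of the x-projections of `u` and `v`, and `y u < y w < y v`, then the
graph contains a cycle. -/
theorem stmt_5 {V : Type} [Fintype V] [DecidableEq V]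
    (G : SimpleGraph V) (l r y : V → ℝ) (hlr : ∀ v, l v ≤ r v)
    (hinj : ∀ u v : V, u ≠ v →
      (Set.Icc (l u) (r u) ∩ Set.Icc (l v) (r v)).Nonempty → y u ≠ y v)
    (hedge : ∀ u v : V, G.Adj u v ↔ u ≠ v ∧ ∃ x : ℝ,
      x ∈ Set.Icc (l u) (r u) ∧ x ∈ Set.Icc (l v) (r v) ∧
      ∀ w : V, w ≠ u → w ≠ v → x ∈ Set.Icc (l w) (r w) →
        ¬ ((y u < y w ∧ y w < y v) ∨ (y v < y w ∧ y w < y u)))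
    (u v w : V) (huv : u ≠ v) (huw : u ≠ w) (hvw : v ≠ w)
    (hend : l w ∈ Set.Ioo (max (l u) (l v)) (min (r u) (r v)) ∨
            r w ∈ Set.Ioo (max (l u) (l v)) (min (r u) (r v)))
    (hy1 : y u < y w) (hy2 : y w < y v) :
    ∃ (a : V) (c : G.Walk a a), c.IsCycle := by
  have hyuv : y u < y v := hy1.trans hy2
  -- choose x₂ inside all three bars, and x₁ inside u,v bars but outside w's bar
  obtain ⟨x₁, x₂, hx1u, hx1v, hx1w, hx2u, hx2v, hx2w⟩ :
      ∃ x₁ x₂ : ℝ, x₁ ∈ Set.Icc (l u) (r u) ∧ x₁ ∈ Set.Icc (l v) (r v) ∧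
        x₁ ∉ Set.Icc (l w) (r w) ∧
        x₂ ∈ Set.Icc (l u) (r u) ∧ x₂ ∈ Set.Icc (l v) (r v) ∧
        x₂ ∈ Set.Icc (l w) (r w) := by
    rcases hend with ⟨h1, h2⟩ | ⟨h1, h2⟩
    · refine ⟨(max (l u) (l v) + l w) / 2, l w, ?_, ?_, ?_, ?_, ?_, ?_⟩
      · constructor
        · linarith [le_max_left (l u) (l v)]
        · have := min_le_left (r u) (r v); linarith
      · constructor
        · linarith [le_max_right (l u) (l v)]
        · have := min_le_right (r u) (r v); linarith
      · intro ⟨ha, _⟩; linarith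
      · exact ⟨le_of_lt (lt_of_le_of_lt (le_max_left _ _) h1),
          le_of_lt (lt_of_lt_of_le h2 (min_le_left _ _))⟩
      · exact ⟨le_of_lt (lt_of_le_of_lt (le_max_right _ _) h1),
          le_of_lt (lt_of_lt_of_le h2 (min_le_right _ _))⟩
      · exact ⟨le_refl _, hlr w⟩
    · refine ⟨(r w + min (r u) (r v)) / 2, r w, ?_, ?_, ?_, ?_, ?_, ?_⟩
      · constructor
        · have := le_max_left (l u) (l v); linarith
        · linarith [min_le_left (r u) (r v)]
      · constructor
        · have := le_max_right (l u) (l v); linarith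
        · linarith [min_le_right (r u) (r v)]
      · intro ⟨_, hb⟩; linarith
      · exact ⟨le_of_lt (lt_of_le_of_lt (le_max_left _ _) h1),
          le_of_lt (lt_of_lt_of_le h2 (min_le_left _ _))⟩
      · exact ⟨le_of_lt (lt_of_le_of_lt (le_max_right _ _) h1),
          le_of_lt (lt_of_lt_of_le h2 (min_le_right _ _))⟩
      · exact ⟨hlr w, le_refl _⟩
  -- path from u to v at x₁, avoiding w
  obtain ⟨p₁, hp₁, hsupp₁⟩ := pathAt G l r y hedge x₁ _ u v hx1u hx1v hyuv (le_refl _)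
  have hwns₁ : w ∉ p₁.support := fun hmem => hx1w (hsupp₁ w hmem).1
  -- paths from u to w and w to v at x₂
  obtain ⟨p, hp, hpsupp⟩ := pathAt G l r y hedge x₂ _ u w hx2u hx2w hy1 (le_refl _)
  obtain ⟨q, hq, hqsupp⟩ := pathAt G l r y hedge x₂ _ w v hx2w hx2v hy2 (le_refl _)
  -- the concatenation is a path
  have hqtail : q.support = w :: q.support.tail := SimpleGraph.Walk.support_eq_cons q
  have hqnodup : q.support.Nodup := hq.support_nodup
  have hwtail : w ∉ q.support.tail := by
    rw [hqtail] at hqnodup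
    exact (List.nodup_cons.mp hqnodup).1
  have happ : (p.append q).IsPath := by
    rw [SimpleGraph.Walk.isPath_def, SimpleGraph.Walk.support_append, List.nodup_append]
    refine ⟨hp.support_nodup, ?_, ?_⟩
    · rw [hqtail] at hqnodup
      exact (List.nodup_cons.mp hqnodup).2
    · intro a hap b haq hab
      subst hab
      have haq' : a ∈ q.support := List.mem_of_mem_tail haq
      have hyaw : y a ≤ y w := (hpsupp a hap).2.2
      have hywa : y w ≤ y a := (hqsupp a haq').2.1
      have haw : a = w := by
        by_contra hne
        exact hinj a w hne ⟨x₂, (hpsupp a hap).1, hx2w⟩ (le_antisymm hyaw hywa)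
      exact hwtail (haw ▸ haq)
  have hwmem : w ∈ (p.append q).support := by
    rw [SimpleGraph.Walk.mem_support_append_iff]
    exact Or.inl (SimpleGraph.Walk.end_mem_support p)
  -- two distinct paths from u to v give a cycle
  by_contra hnc
  push_neg at hnc
  have hac : G.IsAcyclic := fun a c hc => hnc a c hc
  have := SimpleGraph.isAcyclic_iff_path_unique.mp hac
    (⟨p₁, hp₁⟩ : G.Path u v) ⟨p.append q, happ⟩
  have heq : p₁ = p.append q := congrArg Subtype.val this
  rw [heq] at hwns₁
  exact hwns₁ hwmem
end

section
/- Let π be a permutation of [n] with the property that for all j ∈ [n−1], |π_{j+1} − π_j| ≠ 1 (i.e., the path P_V = (π1,…,πn) and the path P_H = (1,2,…,n) are edge-disjoint as graphs on vertex set [n]). Fix 0 < ε < 1 and define squares R(v) = [π^{-1}(v), π^{-1}(v)+1+ε] × [v, v+1+ε] for v ∈ [n]. Then: (a) the squares are pairwise disjoint; (b) for distinct u, v, the x-projections of R(u) and R(v) intersect iff |π^{-1}(u) − π^{-1}(v)| ≤ 1, and the y-projections intersect iff |u − v| ≤ 1. -/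
private lemma key_iff {ε : ℝ} (hε0 : 0 < ε) (hε1 : ε < 1) (a b : ℕ) :
    (Set.Icc (a : ℝ) ((a : ℕ) + 1 + ε) ∩ Set.Icc (b : ℝ) ((b : ℕ) + 1 + ε)).Nonempty ↔
      |((a : ℕ) : ℝ) - ((b : ℕ) : ℝ)| ≤ 1 := by
  constructor
  · rintro ⟨x, ⟨h1, h2⟩, ⟨h3, h4⟩⟩
    have hz : |((a : ℤ) - b)| ≤ 1 := by
      by_contra h
      push_neg at h
      have h2' : (2 : ℤ) ≤ |((a : ℤ) - b)| := by omega
      have hc : ((|((a : ℤ) - b)| : ℤ) : ℝ) = |((a : ℝ) - b)| := by push_cast; ring_nf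
      have h2r : (2 : ℝ) ≤ |((a : ℝ) - b)| := by
        rw [← hc]; exact_mod_cast h2'
      have hle : |((a : ℝ) - b)| ≤ 1 + ε := abs_le.2 ⟨by linarith, by linarith⟩
      linarith
    have hc : ((|((a : ℤ) - b)| : ℤ) : ℝ) = |((a : ℝ) - b)| := by push_cast; ring_nf
    rw [← hc]; exact_mod_cast hz
  · intro h
    rw [abs_le] at h
    refine ⟨max (a : ℝ) b, ⟨le_max_left _ _, ?_⟩, ⟨le_max_right _ _, ?_⟩⟩
    · rcases max_cases (a : ℝ) b with ⟨he, _⟩ | ⟨he, _⟩ <;> rw [he] <;> linarith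
    · rcases max_cases (a : ℝ) b with ⟨he, _⟩ | ⟨he, _⟩ <;> rw [he] <;> linarith

/-- If the paths `P_H = (1,…,n)` and `P_V = (π1,…,πn)` are edge-disjoint
(`|π_{j+1} − π_j| ≠ 1` for all j), then the squares placed by Algorithm A are pairwise
disjoint; moreover the x-projections of `R u, R v` intersect iff the positions of u, v
in π differ by at most 1, and the y-projections intersect iff `|u − v| ≤ 1`. -/
theorem stmt_10 {n : ℕ} (π : Equiv.Perm (Fin n)) (ε : ℝ) (hε0 : 0 < ε) (hε1 : ε < 1)
    (hdisj : ∀ j j' : Fin n, (j' : ℕ) = (j : ℕ) + 1 →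
      |((π j' : ℕ) : ℤ) - ((π j : ℕ) : ℤ)| ≠ 1) :
    (∀ u v : Fin n, u ≠ v →
      ((Set.Icc (((π.symm u : Fin n) : ℕ) : ℝ) (((π.symm u : Fin n) : ℕ) + 1 + ε) ×ˢ
          Set.Icc (((u : ℕ) : ℝ)) ((u : ℕ) + 1 + ε)) ∩
        (Set.Icc (((π.symm v : Fin n) : ℕ) : ℝ) (((π.symm v : Fin n) : ℕ) + 1 + ε) ×ˢ
          Set.Icc (((v : ℕ) : ℝ)) ((v : ℕ) + 1 + ε))) = ∅) ∧
    (∀ u v : Fin n, u ≠ v →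
      ((Set.Icc (((π.symm u : Fin n) : ℕ) : ℝ) (((π.symm u : Fin n) : ℕ) + 1 + ε) ∩
        Set.Icc (((π.symm v : Fin n) : ℕ) : ℝ) (((π.symm v : Fin n) : ℕ) + 1 + ε)).Nonempty ↔
        |(((π.symm u : Fin n) : ℕ) : ℝ) - (((π.symm v : Fin n) : ℕ) : ℝ)| ≤ 1)) ∧
    (∀ u v : Fin n, u ≠ v →
      ((Set.Icc (((u : ℕ) : ℝ)) ((u : ℕ) + 1 + ε) ∩
        Set.Icc (((v : ℕ) : ℝ)) ((v : ℕ) + 1 + ε)).Nonempty ↔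
        |((u : ℕ) : ℝ) - ((v : ℕ) : ℝ)| ≤ 1)) := by
  refine ⟨?_, fun u v _ => key_iff hε0 hε1 _ _, fun u v _ => key_iff hε0 hε1 _ _⟩
  intro u v huv
  rw [Set.eq_empty_iff_forall_notMem]
  rintro ⟨x, y⟩ ⟨⟨hx1, hy1⟩, ⟨hx2, hy2⟩⟩
  have hX : |(((π.symm u : Fin n) : ℕ) : ℝ) - (((π.symm v : Fin n) : ℕ) : ℝ)| ≤ 1 :=
    (key_iff hε0 hε1 _ _).1 ⟨x, hx1, hx2⟩
  have hY : |((u : ℕ) : ℝ) - ((v : ℕ) : ℝ)| ≤ 1 :=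
    (key_iff hε0 hε1 _ _).1 ⟨y, hy1, hy2⟩
  -- convert to integers
  have hXz : |(((π.symm u : Fin n) : ℕ) : ℤ) - ((π.symm v : Fin n) : ℕ)| ≤ 1 := by
    have : ((|(((π.symm u : Fin n) : ℕ) : ℤ) - ((π.symm v : Fin n) : ℕ)| : ℤ) : ℝ) ≤ 1 := by
      push_cast; convert hX using 2
    exact_mod_cast this
  have hYz : |((u : ℕ) : ℤ) - ((v : ℕ) : ℤ)| ≤ 1 := by
    have : ((|((u : ℕ) : ℤ) - ((v : ℕ) : ℤ)| : ℤ) : ℝ) ≤ 1 := by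
      push_cast; convert hY using 2
    exact_mod_cast this
  rw [abs_le] at hXz hYz
  have huvn : (u : ℕ) ≠ (v : ℕ) := fun h => huv (Fin.ext h)
  have hpn : ((π.symm u : Fin n) : ℕ) ≠ ((π.symm v : Fin n) : ℕ) := by
    intro h
    exact huvn (by rw [← π.apply_symm_apply u, ← π.apply_symm_apply v, Fin.ext h])
  -- positions differ by exactly 1
  rcases (by omega :
      ((π.symm v : Fin n) : ℕ) = ((π.symm u : Fin n) : ℕ) + 1 ∨
      ((π.symm u : Fin n) : ℕ) = ((π.symm v : Fin n) : ℕ) + 1) with h | h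
  · apply hdisj (π.symm u) (π.symm v) h
    rw [π.apply_symm_apply, π.apply_symm_apply, abs_eq zero_le_one]
    omega
  · apply hdisj (π.symm v) (π.symm u) h
    rw [π.apply_symm_apply, π.apply_symm_apply, abs_eq zero_le_one]
    omega
end

section
/- Let Γ be a bar visibility representation of a graph G = (V, E) (intervals X(v) ⊆ ℝ, heights y(v) ∈ ℝ, edges given by unblocked vertical visibility). Let c ∈ V be adjacent in G to exactly ℓ1, ℓ2, ℓ3, each ℓi having degree 1 in G (so the component of c is a star K_{1,3} with center c). Then at least one ℓi satisfies X(ℓi) ⊆ X(c). -/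
open Classical in
private lemma star_key {V : Type} [Fintype V] [DecidableEq V]
    (G : SimpleGraph V) (lo hi y : V → ℝ)
    (hinj : ∀ u v : V, u ≠ v →
      (Set.Icc (lo u) (hi u) ∩ Set.Icc (lo v) (hi v)).Nonempty → y u ≠ y v)
    (hedge : ∀ u v : V, G.Adj u v ↔ u ≠ v ∧ ∃ x : ℝ,
      x ∈ Set.Icc (lo u) (hi u) ∧ x ∈ Set.Icc (lo v) (hi v) ∧
      ∀ w : V, w ≠ u → w ≠ v → x ∈ Set.Icc (lo w) (hi w) →
        ¬ ((y u < y w ∧ y w < y v) ∨ (y v < y w ∧ y w < y u)))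
    (c a b : V) (hab : a ≠ b)
    (ha : ∀ v : V, G.Adj a v ↔ v = c) (x1 : ℝ)
    (hxa : x1 ∈ Set.Icc (lo a) (hi a)) (hxb : x1 ∈ Set.Icc (lo b) (hi b))
    (hxc : x1 ∉ Set.Icc (lo c) (hi c)) : False := by
  have hyab : y a ≠ y b := hinj a b hab ⟨x1, hxa, hxb⟩
  set P : V → Prop := fun w => x1 ∈ Set.Icc (lo w) (hi w) ∧
    (w = b ∨ (y a < y w ∧ y w < y b) ∨ (y b < y w ∧ y w < y a)) with hP
  have hne : (Finset.univ.filter P).Nonempty :=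
    ⟨b, Finset.mem_filter.2 ⟨Finset.mem_univ _, hxb, Or.inl rfl⟩⟩
  obtain ⟨v, hvmem, hvmin⟩ := Finset.exists_min_image _ (fun w => |y w - y a|) hne
  rw [Finset.mem_filter] at hvmem
  have hvP : P v := hvmem.2
  have hyav : y a ≠ y v := by
    rcases hvP.2 with rfl | h | h
    · exact hyab
    · exact ne_of_lt h.1
    · exact (ne_of_lt h.2).symm
  have hav : a ≠ v := fun h => hyav (by rw [h])
  have hadj : G.Adj a v := by
    rw [hedge]
    refine ⟨hav, x1, hxa, hvP.1, ?_⟩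
    intro w hwa hwv hwx hbet
    have hwP : P w := by
      refine ⟨hwx, Or.inr ?_⟩
      rcases hvP.2 with rfl | ⟨u1, u2⟩ | ⟨u1, u2⟩
      · exact hbet
      · rcases hbet with ⟨t1, t2⟩ | ⟨t1, t2⟩
        · exact Or.inl ⟨t1, by linarith⟩
        · exact absurd t1 (by linarith)
      · rcases hbet with ⟨t1, t2⟩ | ⟨t1, t2⟩
        · exact absurd t1 (by linarith)
        · exact Or.inr ⟨by linarith, t2⟩
    have hlt : |y w - y a| < |y v - y a| := by
      rcases hbet with ⟨t1, t2⟩ | ⟨t1, t2⟩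
      · calc |y w - y a| = y w - y a := abs_of_pos (by linarith)
          _ < y v - y a := by linarith
          _ ≤ |y v - y a| := le_abs_self _
      · calc |y w - y a| = -(y w - y a) := abs_of_neg (by linarith)
          _ < -(y v - y a) := by linarith
          _ ≤ |y v - y a| := neg_le_abs _
    have := hvmin w (Finset.mem_filter.2 ⟨Finset.mem_univ _, hwP⟩)
    linarith
  have hvc : v = c := (ha v).1 hadj
  exact hxc (hvc ▸ hvP.1)

/-- Star gadget: in a bar visibility representation of a graph in which the vertex `c`
is adjacent exactly to `e1, e2, e3` and each `ei` is adjacent only to `c` (the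
component of `c` is a `K_{1,3}` with center `c`), at least one `ei` has its bar's
x-projection contained in that of `c`. -/
theorem stmt_18 {V : Type} [Fintype V] [DecidableEq V]
    (G : SimpleGraph V) (lo hi y : V → ℝ) (hlr : ∀ v, lo v ≤ hi v)
    (hinj : ∀ u v : V, u ≠ v →
      (Set.Icc (lo u) (hi u) ∩ Set.Icc (lo v) (hi v)).Nonempty → y u ≠ y v)
    (hedge : ∀ u v : V, G.Adj u v ↔ u ≠ v ∧ ∃ x : ℝ,
      x ∈ Set.Icc (lo u) (hi u) ∧ x ∈ Set.Icc (lo v) (hi v) ∧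
      ∀ w : V, w ≠ u → w ≠ v → x ∈ Set.Icc (lo w) (hi w) →
        ¬ ((y u < y w ∧ y w < y v) ∨ (y v < y w ∧ y w < y u)))
    (c e1 e2 e3 : V) (hnodup : ([c, e1, e2, e3] : List V).Nodup)
    (hc : ∀ v : V, G.Adj c v ↔ (v = e1 ∨ v = e2 ∨ v = e3))
    (h1 : ∀ v : V, G.Adj e1 v ↔ v = c)
    (h2 : ∀ v : V, G.Adj e2 v ↔ v = c)
    (h3 : ∀ v : V, G.Adj e3 v ↔ v = c) :
    Set.Icc (lo e1) (hi e1) ⊆ Set.Icc (lo c) (hi c) ∨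
    Set.Icc (lo e2) (hi e2) ⊆ Set.Icc (lo c) (hi c) ∨
    Set.Icc (lo e3) (hi e3) ⊆ Set.Icc (lo c) (hi c) := by
  by_contra hcon
  push_neg at hcon
  obtain ⟨hn1, hn2, hn3⟩ := hcon
  simp only [List.nodup_cons, List.mem_cons, List.not_mem_nil, or_false,
    List.nodup_nil, and_true, not_or, List.mem_singleton] at hnodup
  obtain ⟨⟨hce1, hce2, hce3⟩, ⟨he12, he13⟩, he23, -⟩ := hnodup
  -- overlap facts: each leaf's interval meets X(c)
  have overlap : ∀ e : V, G.Adj c e → lo e ≤ hi c ∧ lo c ≤ hi e := by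
    intro e he
    obtain ⟨-, x, hxc, hxe, -⟩ := (hedge c e).1 he
    exact ⟨le_trans hxe.1 hxc.2, le_trans hxc.1 hxe.2⟩
  have o1 := overlap e1 ((hc e1).2 (Or.inl rfl))
  have o2 := overlap e2 ((hc e2).2 (Or.inr (Or.inl rfl)))
  have o3 := overlap e3 ((hc e3).2 (Or.inr (Or.inr rfl)))
  -- each leaf sticks out on one side
  have stick : ∀ e : V, ¬ Set.Icc (lo e) (hi e) ⊆ Set.Icc (lo c) (hi c) →
      lo e < lo c ∨ hi c < hi e := by
    intro e hne
    by_contra h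
    push_neg at h
    exact hne fun x hx => ⟨le_trans h.1 hx.1, le_trans hx.2 h.2⟩
  have s1 := stick e1 hn1
  have s2 := stick e2 hn2
  have s3 := stick e3 hn3
  -- two leaves sticking out left is impossible
  have left : ∀ a b : V, a ≠ b → (∀ v : V, G.Adj a v ↔ v = c) →
      lo a < lo c → lo b < lo c → lo c ≤ hi a → lo c ≤ hi b → False := by
    intro a b hab ha la lb ra rb
    have hmax : max (lo a) (lo b) < lo c := max_lt la lb
    exact star_key G lo hi y hinj hedge c a b hab ha (max (lo a) (lo b))
      ⟨le_max_left _ _, le_trans hmax.le ra⟩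
      ⟨le_max_right _ _, le_trans hmax.le rb⟩
      (fun h => absurd h.1 (not_le.2 hmax))
  have right : ∀ a b : V, a ≠ b → (∀ v : V, G.Adj a v ↔ v = c) →
      hi c < hi a → hi c < hi b → lo a ≤ hi c → lo b ≤ hi c → False := by
    intro a b hab ha la lb ra rb
    have hmin : hi c < min (hi a) (hi b) := lt_min la lb
    exact star_key G lo hi y hinj hedge c a b hab ha (min (hi a) (hi b))
      ⟨le_trans ra hmin.le, min_le_left _ _⟩
      ⟨le_trans rb hmin.le, min_le_right _ _⟩
      (fun h => absurd h.2 (not_le.2 hmin))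
  rcases s1 with s1 | s1 <;> rcases s2 with s2 | s2 <;> rcases s3 with s3 | s3
  · exact left e1 e2 he12 h1 s1 s2 o1.2 o2.2
  · exact left e1 e2 he12 h1 s1 s2 o1.2 o2.2
  · exact left e1 e3 he13 h1 s1 s3 o1.2 o3.2
  · exact right e2 e3 he23 h2 s2 s3 o2.1 o3.1
  · exact left e2 e3 he23 h2 s2 s3 o2.2 o3.2
  · exact right e1 e3 he13 h1 s1 s3 o1.1 o3.1
  · exact right e1 e2 he12 h1 s1 s2 o1.1 o2.1
  · exact right e1 e2 he12 h1 s1 s2 o1.1 o2.1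
end

section
/- Let Γ be a bar visibility representation of a graph G whose component containing c is the 1-subdivision of K_{1,3}: c is adjacent to ℓ1, ℓ2, ℓ3, and each ℓi is additionally adjacent to a leaf m_i (so removal of c creates three components {ℓi, m_i}). Then there exists i such that X(ℓi) ∪ X(m_i) ⊆ X(c); in particular X(m_i) ∩ X(c) ≠ ∅ for that i. -/
/-- At a fixed abscissa `x`, any two bars containing `x` are connected by a
chain of bars containing `x`, with consecutive bars adjacent in `G`. -/
private lemma chainR {V : Type} [Fintype V]
    (G : SimpleGraph V) (lo hi y : V → ℝ)
    (hinj : ∀ u v : V, u ≠ v →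
      (Set.Icc (lo u) (hi u) ∩ Set.Icc (lo v) (hi v)).Nonempty → y u ≠ y v)
    (hedge : ∀ u v : V, G.Adj u v ↔ u ≠ v ∧ ∃ x : ℝ,
      x ∈ Set.Icc (lo u) (hi u) ∧ x ∈ Set.Icc (lo v) (hi v) ∧
      ∀ w : V, w ≠ u → w ≠ v → x ∈ Set.Icc (lo w) (hi w) →
        ¬ ((y u < y w ∧ y w < y v) ∨ (y v < y w ∧ y w < y u)))
    (x : ℝ) :
    ∀ n : ℕ, ∀ u v : V, x ∈ Set.Icc (lo u) (hi u) → x ∈ Set.Icc (lo v) (hi v) →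
      ({w : V | x ∈ Set.Icc (lo w) (hi w) ∧
        ((y u < y w ∧ y w < y v) ∨ (y v < y w ∧ y w < y u))}).ncard ≤ n →
      Relation.ReflTransGen
        (fun a b => x ∈ Set.Icc (lo a) (hi a) ∧ x ∈ Set.Icc (lo b) (hi b) ∧ G.Adj a b)
        u v := by
  have base : ∀ u v : V, x ∈ Set.Icc (lo u) (hi u) → x ∈ Set.Icc (lo v) (hi v) →
      ({w : V | x ∈ Set.Icc (lo w) (hi w) ∧
        ((y u < y w ∧ y w < y v) ∨ (y v < y w ∧ y w < y u))}) = ∅ →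
      Relation.ReflTransGen
        (fun a b => x ∈ Set.Icc (lo a) (hi a) ∧ x ∈ Set.Icc (lo b) (hi b) ∧ G.Adj a b)
        u v := by
    intro u v hu hv hB
    by_cases huv : u = v
    · subst huv; exact Relation.ReflTransGen.refl
    · refine Relation.ReflTransGen.single ⟨hu, hv, ?_⟩
      rw [hedge]
      refine ⟨huv, x, hu, hv, fun w hwu hwv hwx hbet => ?_⟩
      have : w ∈ ({w : V | x ∈ Set.Icc (lo w) (hi w) ∧
          ((y u < y w ∧ y w < y v) ∨ (y v < y w ∧ y w < y u))}) := ⟨hwx, hbet⟩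
      rw [hB] at this
      exact this
  intro n
  induction n with
  | zero =>
    intro u v hu hv hcard
    refine base u v hu hv ?_
    have hfin : ({w : V | x ∈ Set.Icc (lo w) (hi w) ∧
        ((y u < y w ∧ y w < y v) ∨ (y v < y w ∧ y w < y u))}).Finite := Set.toFinite _
    exact (Set.ncard_eq_zero hfin).mp (Nat.le_zero.mp hcard)
  | succ n ih =>
    intro u v hu hv hcard
    rcases Set.eq_empty_or_nonempty ({w : V | x ∈ Set.Icc (lo w) (hi w) ∧
        ((y u < y w ∧ y w < y v) ∨ (y v < y w ∧ y w < y u))}) with hB | ⟨w, hwx, hwbet⟩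
    · exact base u v hu hv hB
    · have hwB : w ∈ ({w : V | x ∈ Set.Icc (lo w) (hi w) ∧
          ((y u < y w ∧ y w < y v) ∨ (y v < y w ∧ y w < y u))}) := ⟨hwx, hwbet⟩
      have hfin : ({w : V | x ∈ Set.Icc (lo w) (hi w) ∧
          ((y u < y w ∧ y w < y v) ∨ (y v < y w ∧ y w < y u))}).Finite := Set.toFinite _
      have hdiff : (({w : V | x ∈ Set.Icc (lo w) (hi w) ∧
          ((y u < y w ∧ y w < y v) ∨ (y v < y w ∧ y w < y u))}) \ {w}).ncard ≤ n := by
        have := Set.ncard_diff_singleton_of_mem hwB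
        omega
      have hsub1 : ({z : V | x ∈ Set.Icc (lo z) (hi z) ∧
          ((y u < y z ∧ y z < y w) ∨ (y w < y z ∧ y z < y u))}) ⊆
          (({w : V | x ∈ Set.Icc (lo w) (hi w) ∧
          ((y u < y w ∧ y w < y v) ∨ (y v < y w ∧ y w < y u))}) \ {w}) := by
        rintro z ⟨hzx, hzbet⟩
        refine ⟨⟨hzx, ?_⟩, ?_⟩
        · rcases hzbet with ⟨h1, h2⟩ | ⟨h1, h2⟩ <;>
            rcases hwbet with ⟨h3, h4⟩ | ⟨h3, h4⟩
          · exact Or.inl ⟨h1, by linarith⟩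
          · exact absurd h1 (by linarith)
          · exact absurd h1 (by linarith)
          · exact Or.inr ⟨by linarith, h2⟩
        · intro hzw
          rw [Set.mem_singleton_iff] at hzw
          subst hzw
          rcases hzbet with ⟨h1, h2⟩ | ⟨h1, h2⟩ <;> linarith
      have hsub2 : ({z : V | x ∈ Set.Icc (lo z) (hi z) ∧
          ((y w < y z ∧ y z < y v) ∨ (y v < y z ∧ y z < y w))}) ⊆
          (({w : V | x ∈ Set.Icc (lo w) (hi w) ∧
          ((y u < y w ∧ y w < y v) ∨ (y v < y w ∧ y w < y u))}) \ {w}) := by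
        rintro z ⟨hzx, hzbet⟩
        refine ⟨⟨hzx, ?_⟩, ?_⟩
        · rcases hzbet with ⟨h1, h2⟩ | ⟨h1, h2⟩ <;>
            rcases hwbet with ⟨h3, h4⟩ | ⟨h3, h4⟩
          · exact Or.inl ⟨by linarith, h2⟩
          · exact absurd h2 (by linarith)
          · exact absurd h2 (by linarith)
          · exact Or.inr ⟨h1, by linarith⟩
        · intro hzw
          rw [Set.mem_singleton_iff] at hzw
          subst hzw
          rcases hzbet with ⟨h1, h2⟩ | ⟨h1, h2⟩ <;> linarith
      have c1 := ih u w hu hwx (le_trans (Set.ncard_le_ncard hsub1 hfin.diff) hdiff)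
      have c2 := ih w v hwx hv (le_trans (Set.ncard_le_ncard hsub2 hfin.diff) hdiff)
      exact c1.trans c2

/-- Spider gadget: in a bar visibility representation of a graph whose component
containing `c` is the 1-subdivision of `K_{1,3}` (center `c`, middle vertices
`e1, e2, e3`, leaves `m1, m2, m3`), there is an `i` with
`X(ei) ∪ X(mi) ⊆ X(c)`; in particular `X(mi) ∩ X(c) ≠ ∅` for that `i`. -/
theorem stmt_19 {V : Type} [Fintype V] [DecidableEq V]
    (G : SimpleGraph V) (lo hi y : V → ℝ) (hlr : ∀ v, lo v ≤ hi v)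
    (hinj : ∀ u v : V, u ≠ v →
      (Set.Icc (lo u) (hi u) ∩ Set.Icc (lo v) (hi v)).Nonempty → y u ≠ y v)
    (hedge : ∀ u v : V, G.Adj u v ↔ u ≠ v ∧ ∃ x : ℝ,
      x ∈ Set.Icc (lo u) (hi u) ∧ x ∈ Set.Icc (lo v) (hi v) ∧
      ∀ w : V, w ≠ u → w ≠ v → x ∈ Set.Icc (lo w) (hi w) →
        ¬ ((y u < y w ∧ y w < y v) ∨ (y v < y w ∧ y w < y u)))
    (c e1 e2 e3 m1 m2 m3 : V)
    (hnodup : ([c, e1, e2, e3, m1, m2, m3] : List V).Nodup)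
    (hc : ∀ v : V, G.Adj c v ↔ (v = e1 ∨ v = e2 ∨ v = e3))
    (he1 : ∀ v : V, G.Adj e1 v ↔ (v = c ∨ v = m1))
    (he2 : ∀ v : V, G.Adj e2 v ↔ (v = c ∨ v = m2))
    (he3 : ∀ v : V, G.Adj e3 v ↔ (v = c ∨ v = m3))
    (hm1 : ∀ v : V, G.Adj m1 v ↔ v = e1)
    (hm2 : ∀ v : V, G.Adj m2 v ↔ v = e2)
    (hm3 : ∀ v : V, G.Adj m3 v ↔ v = e3) :
    (Set.Icc (lo e1) (hi e1) ∪ Set.Icc (lo m1) (hi m1) ⊆ Set.Icc (lo c) (hi c) ∧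
      (Set.Icc (lo m1) (hi m1) ∩ Set.Icc (lo c) (hi c)).Nonempty) ∨
    (Set.Icc (lo e2) (hi e2) ∪ Set.Icc (lo m2) (hi m2) ⊆ Set.Icc (lo c) (hi c) ∧
      (Set.Icc (lo m2) (hi m2) ∩ Set.Icc (lo c) (hi c)).Nonempty) ∨
    (Set.Icc (lo e3) (hi e3) ∪ Set.Icc (lo m3) (hi m3) ⊆ Set.Icc (lo c) (hi c) ∧
      (Set.Icc (lo m3) (hi m3) ∩ Set.Icc (lo c) (hi c)).Nonempty) := by
  classical
  -- distinctness facts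
  simp only [List.nodup_cons, List.mem_cons, List.not_mem_nil, or_false,
    List.nodup_nil, and_true, not_or] at hnodup
  -- witnesses of the edges c-ei and ei-mi
  obtain ⟨-, q1, hq1c, hq1e, -⟩ := (hedge c e1).1 ((hc e1).2 (Or.inl rfl))
  obtain ⟨-, q2, hq2c, hq2e, -⟩ := (hedge c e2).1 ((hc e2).2 (Or.inr (Or.inl rfl)))
  obtain ⟨-, q3, hq3c, hq3e, -⟩ := (hedge c e3).1 ((hc e3).2 (Or.inr (Or.inr rfl)))
  obtain ⟨-, p1, hp1e, hp1m, -⟩ := (hedge e1 m1).1 ((he1 m1).2 (Or.inr rfl))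
  obtain ⟨-, p2, hp2e, hp2m, -⟩ := (hedge e2 m2).1 ((he2 m2).2 (Or.inr rfl))
  obtain ⟨-, p3, hp3e, hp3m, -⟩ := (hedge e3 m3).1 ((he3 m3).2 (Or.inr rfl))
  -- key: two branches cannot share an abscissa outside X(c)
  have key : ∀ e m e' m' : V,
      (∀ w, G.Adj e w → w = c ∨ w = m) →
      (∀ w, G.Adj m w → w = e) →
      e ≠ e' → e ≠ m' → m ≠ e' → m ≠ m' →
      ∀ (x0 : ℝ) (u v : V), x0 ∉ Set.Icc (lo c) (hi c) →
        (u = e ∨ u = m) → (v = e' ∨ v = m') →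
        x0 ∈ Set.Icc (lo u) (hi u) → x0 ∈ Set.Icc (lo v) (hi v) → False := by
    intro e m e' m' hen hmn d1 d2 d3 d4 x0 u v hxc hu hv hux hvx
    have hreach := chainR G lo hi y hinj hedge x0 _ u v hux hvx le_rfl
    have hinv : ∀ a b : V, Relation.ReflTransGen
        (fun a b => x0 ∈ Set.Icc (lo a) (hi a) ∧ x0 ∈ Set.Icc (lo b) (hi b) ∧ G.Adj a b)
        a b → (a = e ∨ a = m) → (b = e ∨ b = m) := by
      intro a b h ha
      induction h with
      | refl => exact ha
      | tail _ hstep ih =>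
        obtain ⟨-, hbx, hadj⟩ := hstep
        rcases ih with rfl | rfl
        · rcases hen _ hadj with rfl | rfl
          · exact absurd hbx hxc
          · exact Or.inr rfl
        · exact Or.inl (hmn _ hadj)
    have hb := hinv u v hreach hu
    rcases hb with rfl | rfl <;> rcases hv with h | h
    · exact d1 h
    · exact d2 h
    · exact d3 h
    · exact d4 h
  -- gluing: a branch's bars form an "interval"
  have glue : ∀ (e m : V) (p q t x0 : ℝ),
      p ∈ Set.Icc (lo e) (hi e) → p ∈ Set.Icc (lo m) (hi m) →
      q ∈ Set.Icc (lo e) (hi e) →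
      (t ∈ Set.Icc (lo e) (hi e) ∨ t ∈ Set.Icc (lo m) (hi m)) →
      ((t ≤ x0 ∧ x0 ≤ q) ∨ (q ≤ x0 ∧ x0 ≤ t)) →
      (x0 ∈ Set.Icc (lo e) (hi e) ∨ x0 ∈ Set.Icc (lo m) (hi m)) := by
    intro e m p q t x0 hpe hpm hq ht hbet
    simp only [Set.mem_Icc] at *
    rcases ht with ht | ht
    · left; rcases hbet with ⟨h1, h2⟩ | ⟨h1, h2⟩ <;> constructor <;> linarith [ht.1, ht.2, hq.1, hq.2]
    · rcases le_total x0 p with hxp | hxp <;> rcases hbet with ⟨h1, h2⟩ | ⟨h1, h2⟩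
      · right; constructor <;> linarith [ht.1, ht.2, hpm.1, hpm.2]
      · left; constructor <;> linarith [hq.1, hq.2, hpe.1, hpe.2]
      · left; constructor <;> linarith [hq.1, hq.2, hpe.1, hpe.2]
      · right; constructor <;> linarith [ht.1, ht.2, hpm.1, hpm.2]
  -- two branches cannot both escape on the same side
  have pair : ∀ e m e' m' : V, ∀ p q p' q' t t' : ℝ,
      (∀ w, G.Adj e w → w = c ∨ w = m) → (∀ w, G.Adj m w → w = e) →
      e ≠ e' → e ≠ m' → m ≠ e' → m ≠ m' →
      p ∈ Set.Icc (lo e) (hi e) → p ∈ Set.Icc (lo m) (hi m) →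
      q ∈ Set.Icc (lo c) (hi c) → q ∈ Set.Icc (lo e) (hi e) →
      p' ∈ Set.Icc (lo e') (hi e') → p' ∈ Set.Icc (lo m') (hi m') →
      q' ∈ Set.Icc (lo c) (hi c) → q' ∈ Set.Icc (lo e') (hi e') →
      (t ∈ Set.Icc (lo e) (hi e) ∨ t ∈ Set.Icc (lo m) (hi m)) →
      (t' ∈ Set.Icc (lo e') (hi e') ∨ t' ∈ Set.Icc (lo m') (hi m')) →
      ((t < lo c ∧ t' < lo c) ∨ (hi c < t ∧ hi c < t')) → False := by
    intro e m e' m' p q p' q' t t' hen hmn d1 d2 d3 d4 hpe hpm hqc hqe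
      hpe' hpm' hqc' hqe' ht ht' hside
    rcases hside with ⟨hl, hl'⟩ | ⟨hr, hr'⟩
    · -- both escape left of lo c; common abscissa max t t'
      set x0 := max t t' with hx0
      have hx0lt : x0 < lo c := max_lt hl hl'
      have hx0c : x0 ∉ Set.Icc (lo c) (hi c) := by
        simp only [Set.mem_Icc, not_and_or, not_le]
        exact Or.inl hx0lt
      have hmemi := glue e m p q t x0 hpe hpm hqe ht
        (Or.inl ⟨le_max_left _ _, by linarith [hqc.1]⟩)
      have hmemj := glue e' m' p' q' t' x0 hpe' hpm' hqe' ht'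
        (Or.inl ⟨le_max_right _ _, by linarith [hqc'.1]⟩)
      rcases hmemi with hx | hx <;> rcases hmemj with hx' | hx'
      · exact key e m e' m' hen hmn d1 d2 d3 d4 x0 e e' hx0c (Or.inl rfl) (Or.inl rfl) hx hx'
      · exact key e m e' m' hen hmn d1 d2 d3 d4 x0 e m' hx0c (Or.inl rfl) (Or.inr rfl) hx hx'
      · exact key e m e' m' hen hmn d1 d2 d3 d4 x0 m e' hx0c (Or.inr rfl) (Or.inl rfl) hx hx'
      · exact key e m e' m' hen hmn d1 d2 d3 d4 x0 m m' hx0c (Or.inr rfl) (Or.inr rfl) hx hx'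
    · -- both escape right of hi c; common abscissa min t t'
      set x0 := min t t' with hx0
      have hx0gt : hi c < x0 := lt_min hr hr'
      have hx0c : x0 ∉ Set.Icc (lo c) (hi c) := by
        simp only [Set.mem_Icc, not_and_or, not_le]
        exact Or.inr hx0gt
      have hmemi := glue e m p q t x0 hpe hpm hqe ht
        (Or.inr ⟨by linarith [hqc.2], min_le_left _ _⟩)
      have hmemj := glue e' m' p' q' t' x0 hpe' hpm' hqe' ht'
        (Or.inr ⟨by linarith [hqc'.2], min_le_right _ _⟩)
      rcases hmemi with hx | hx <;> rcases hmemj with hx' | hx'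
      · exact key e m e' m' hen hmn d1 d2 d3 d4 x0 e e' hx0c (Or.inl rfl) (Or.inl rfl) hx hx'
      · exact key e m e' m' hen hmn d1 d2 d3 d4 x0 e m' hx0c (Or.inl rfl) (Or.inr rfl) hx hx'
      · exact key e m e' m' hen hmn d1 d2 d3 d4 x0 m e' hx0c (Or.inr rfl) (Or.inl rfl) hx hx'
      · exact key e m e' m' hen hmn d1 d2 d3 d4 x0 m m' hx0c (Or.inr rfl) (Or.inr rfl) hx hx'
  -- reduce goal to the subset statement
  suffices h : (Set.Icc (lo e1) (hi e1) ∪ Set.Icc (lo m1) (hi m1) ⊆ Set.Icc (lo c) (hi c)) ∨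
      (Set.Icc (lo e2) (hi e2) ∪ Set.Icc (lo m2) (hi m2) ⊆ Set.Icc (lo c) (hi c)) ∨
      (Set.Icc (lo e3) (hi e3) ∪ Set.Icc (lo m3) (hi m3) ⊆ Set.Icc (lo c) (hi c)) by
    rcases h with h | h | h
    · exact Or.inl ⟨h, ⟨lo m1, ⟨le_refl _, hlr m1⟩, h (Set.mem_union_right _ ⟨le_refl _, hlr m1⟩)⟩⟩
    · exact Or.inr (Or.inl ⟨h, ⟨lo m2, ⟨le_refl _, hlr m2⟩,
        h (Set.mem_union_right _ ⟨le_refl _, hlr m2⟩)⟩⟩)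
    · exact Or.inr (Or.inr ⟨h, ⟨lo m3, ⟨le_refl _, hlr m3⟩,
        h (Set.mem_union_right _ ⟨le_refl _, hlr m3⟩)⟩⟩)
  by_contra hcon
  push_neg at hcon
  obtain ⟨hn1, hn2, hn3⟩ := hcon
  rw [Set.not_subset] at hn1 hn2 hn3
  obtain ⟨t1, ht1, ht1c⟩ := hn1
  obtain ⟨t2, ht2, ht2c⟩ := hn2
  obtain ⟨t3, ht3, ht3c⟩ := hn3
  rw [Set.mem_union] at ht1 ht2 ht3
  simp only [Set.mem_Icc, not_and_or, not_le] at ht1c ht2c ht3c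
  -- neighbor-closure facts
  have hen1 : ∀ w, G.Adj e1 w → w = c ∨ w = m1 := fun w h => (he1 w).1 h
  have hen2 : ∀ w, G.Adj e2 w → w = c ∨ w = m2 := fun w h => (he2 w).1 h
  have hmn1 : ∀ w, G.Adj m1 w → w = e1 := fun w h => (hm1 w).1 h
  have hmn2 : ∀ w, G.Adj m2 w → w = e2 := fun w h => (hm2 w).1 h
  -- distinctness
  obtain ⟨-, ⟨n12, n13, -, n1m2, n1m3⟩, ⟨n23, n2m1, -, n2m3⟩, ⟨n3m1, n3m2, -⟩,
    ⟨nm12, nm13⟩, nm23, -⟩ := hnodup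
  have d12 : e1 ≠ e2 := n12
  have d1m2 : e1 ≠ m2 := n1m2
  have dm1e2 : m1 ≠ e2 := fun h => n2m1 h.symm
  have dm1m2 : m1 ≠ m2 := nm12
  have d13 : e1 ≠ e3 := n13
  have d1m3 : e1 ≠ m3 := n1m3
  have dm1e3 : m1 ≠ e3 := fun h => n3m1 h.symm
  have dm1m3 : m1 ≠ m3 := nm13
  have d23 : e2 ≠ e3 := n23
  have d2m3 : e2 ≠ m3 := n2m3
  have dm2e3 : m2 ≠ e3 := fun h => n3m2 h.symm
  have dm2m3 : m2 ≠ m3 := nm23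
  have pair12 := pair e1 m1 e2 m2 p1 q1 p2 q2 t1 t2 hen1 hmn1 d12 d1m2 dm1e2 dm1m2
    hp1e hp1m hq1c hq1e hp2e hp2m hq2c hq2e ht1 ht2
  have pair13 := pair e1 m1 e3 m3 p1 q1 p3 q3 t1 t3 hen1 hmn1 d13 d1m3 dm1e3 dm1m3
    hp1e hp1m hq1c hq1e hp3e hp3m hq3c hq3e ht1 ht3
  have pair23 := pair e2 m2 e3 m3 p2 q2 p3 q3 t2 t3 hen2 hmn2 d23 d2m3 dm2e3 dm2m3
    hp2e hp2m hq2c hq2e hp3e hp3m hq3c hq3e ht2 ht3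
  rcases ht1c with s1 | s1 <;> rcases ht2c with s2 | s2 <;> rcases ht3c with s3 | s3
  · exact pair12 (Or.inl ⟨s1, s2⟩)
  · exact pair12 (Or.inl ⟨s1, s2⟩)
  · exact pair13 (Or.inl ⟨s1, s3⟩)
  · exact pair23 (Or.inr ⟨s2, s3⟩)
  · exact pair23 (Or.inl ⟨s2, s3⟩)
  · exact pair13 (Or.inr ⟨s1, s3⟩)
  · exact pair12 (Or.inr ⟨s1, s2⟩)
  · exact pair12 (Or.inr ⟨s1, s2⟩)
end
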